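/- arXiv:1303.0370 — 5 statements merged into one kernel-verified Lean document; each statement's English description precedes it below -/
import Mathlib

section
/- Let d ≥ 1 and let ρ = (ρ₁, …, ρ_m) be a contraction vector for ℝ^d. Then any two dust-like self-similar sets E, F ⊆ ℝ^d with contraction vector ρ are Lipschitz equivalent. -/
open Set Metric MeasureTheory

noncomputable section

/-- Two subsets of a metric space are Lipschitz equivalent if there is a
bi-Lipschitz bijection between them. -/
def LipschitzEquivalent {X : Type*} [MetricSpace X] (E F : Set X) : Prop :=
  ∃ (f : X → X) (C : ℝ), 0 < C ∧ Set.BijOn f E F ∧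
    ∀ x ∈ E, ∀ y ∈ E,
      C⁻¹ * dist x y ≤ dist (f x) (f y) ∧ dist (f x) (f y) ≤ C * dist x y

/-- `φ` is a similarity with ratio `r`. -/
def IsSimilarity {X : Type*} [MetricSpace X] (r : ℝ) (φ : X → X) : Prop :=
  ∀ x y, dist (φ x) (φ y) = r * dist x y

/-- `ρ = (ρ₁, …, ρ_m)` is a contraction vector for `ℝ^d`. -/
def IsContractionVector (d m : ℕ) (ρ : Fin m → ℝ) : Prop :=
  (∀ j, ρ j ∈ Set.Ioo (0:ℝ) 1) ∧ ∑ j, ρ j ^ d < 1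

/-- `E` is a dust-like self-similar set with contraction vector `ρ`,
i.e. `E ∈ D(ρ)`. -/
def IsDustLike {X : Type*} [MetricSpace X] {m : ℕ} (ρ : Fin m → ℝ) (E : Set X) : Prop :=
  E.Nonempty ∧ IsCompact E ∧
  ∃ φ : Fin m → X → X,
    (∀ j, IsSimilarity (ρ j) (φ j)) ∧
    E = ⋃ j, φ j '' E ∧
    Pairwise fun j k => Disjoint (φ j '' E) (φ k '' E)

/-- Composition of the similarities along the first `n` letters of a word `σ`. -/
private def dustΦ {X : Type*} {m : ℕ} (φ : Fin m → X → X) (σ : ℕ → Fin m) : ℕ → X → X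
  | 0 => id
  | n+1 => dustΦ φ σ n ∘ φ (σ n)

private lemma dustΦ_dist {X : Type*} [MetricSpace X] {m : ℕ} {ρ : Fin m → ℝ}
    {φ : Fin m → X → X} (hsim : ∀ j, IsSimilarity (ρ j) (φ j)) (σ : ℕ → Fin m) :
    ∀ (n : ℕ) (x y : X),
      dist (dustΦ φ σ n x) (dustΦ φ σ n y) = (∏ i ∈ Finset.range n, ρ (σ i)) * dist x y
  | 0, x, y => by simp [dustΦ]
  | n+1, x, y => by
    show dist (dustΦ φ σ n (φ (σ n) x)) (dustΦ φ σ n (φ (σ n) y)) = _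
    rw [dustΦ_dist hsim σ n, hsim (σ n), Finset.prod_range_succ]
    ring

private lemma dustΦ_congr {X : Type*} {m : ℕ} (φ : Fin m → X → X) {σ τ : ℕ → Fin m} :
    ∀ n : ℕ, (∀ i < n, σ i = τ i) → ∀ x : X, dustΦ φ σ n x = dustΦ φ τ n x
  | 0, _, x => rfl
  | n+1, h, x => by
    show dustΦ φ σ n (φ (σ n) x) = dustΦ φ τ n (φ (τ n) x)
    rw [h n (Nat.lt_succ_self n)]
    exact dustΦ_congr φ n (fun i hi => h i (hi.trans (Nat.lt_succ_self n))) _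

/-- The coding map machinery for a dust-like self-similar set with at least two pieces. -/
private lemma coding_exists {X : Type*} [MetricSpace X] {m : ℕ} (hm : 2 ≤ m)
    {ρ : Fin m → ℝ} (hρ : ∀ j, ρ j ∈ Set.Ioo (0:ℝ) 1)
    {E : Set X} (hEne : E.Nonempty) (hEc : IsCompact E)
    {φ : Fin m → X → X} (hsim : ∀ j, IsSimilarity (ρ j) (φ j))
    (hEeq : E = ⋃ j, φ j '' E)
    (hdisj : Pairwise fun j k => Disjoint (φ j '' E) (φ k '' E)) :
    ∃ (π : (ℕ → Fin m) → X) (δ D : ℝ), 0 < δ ∧ δ ≤ D ∧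
      (∀ σ, π σ ∈ E) ∧
      (∀ x ∈ E, ∃ σ, π σ = x) ∧
      (∀ σ τ : ℕ → Fin m, ∀ n : ℕ, (∀ i < n, σ i = τ i) →
        dist (π σ) (π τ) ≤ (∏ i ∈ Finset.range n, ρ (σ i)) * D) ∧
      (∀ σ τ : ℕ → Fin m, ∀ n : ℕ, (∀ i < n, σ i = τ i) → σ n ≠ τ n →
        (∏ i ∈ Finset.range n, ρ (σ i)) * δ ≤ dist (π σ) (π τ)) := by
  haveI : Nonempty (Fin m) := ⟨⟨0, by omega⟩⟩
  have hsub : ∀ j, φ j '' E ⊆ E := by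
    intro j
    have := Set.subset_iUnion (fun j => φ j '' E) j
    rw [← hEeq] at this; exact this
  have hφcont : ∀ j, Continuous (φ j) := fun j =>
    (LipschitzWith.of_dist_le_mul (K := ⟨ρ j, (hρ j).1.le⟩)
      (fun x y => le_of_eq (hsim j x y))).continuous
  have hΦcont : ∀ (σ : ℕ → Fin m) (n : ℕ), Continuous (dustΦ φ σ n) := by
    intro σ n
    induction n with
    | zero => exact continuous_id
    | succ n ih => exact ih.comp (hφcont (σ n))
  have hPpos : ∀ (σ : ℕ → Fin m) (n : ℕ), 0 < ∏ i ∈ Finset.range n, ρ (σ i) :=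
    fun σ n => Finset.prod_pos fun i _ => (hρ (σ i)).1
  -- nested compact sets
  have hdec : ∀ (σ : ℕ → Fin m) (n : ℕ), dustΦ φ σ (n+1) '' E ⊆ dustΦ φ σ n '' E := by
    rintro σ n _ ⟨x, hx, rfl⟩
    exact ⟨φ (σ n) x, hsub (σ n) ⟨x, hx, rfl⟩, rfl⟩
  have hiInter : ∀ σ : ℕ → Fin m, (⋂ n, dustΦ φ σ n '' E).Nonempty := by
    intro σ
    exact IsCompact.nonempty_iInter_of_sequence_nonempty_isCompact_isClosed _
      (hdec σ) (fun n => hEne.image _) (hEc.image (hΦcont σ 0))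
      (fun n => (hEc.image (hΦcont σ n)).isClosed)
  set π : (ℕ → Fin m) → X := fun σ => (hiInter σ).some with hπ
  have hπmem : ∀ (σ : ℕ → Fin m) (n : ℕ), π σ ∈ dustΦ φ σ n '' E :=
    fun σ n => Set.mem_iInter.1 (hiInter σ).some_mem n
  have hπE : ∀ σ, π σ ∈ E := by
    intro σ
    have := hπmem σ 0
    simpa [dustΦ] using this
  -- the separation constant
  have hsep : ∀ j k : Fin m, ∃ δ : ℝ, 0 < δ ∧
      (j ≠ k → ∀ a ∈ φ j '' E, ∀ b ∈ φ k '' E, δ ≤ dist a b) := by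
    intro j k
    by_cases h : j = k
    · exact ⟨1, one_pos, fun hjk => absurd h hjk⟩
    · have hs : IsCompact (φ j '' E) := hEc.image (hφcont j)
      have ht : IsCompact (φ k '' E) := hEc.image (hφcont k)
      have hsne : (φ j '' E).Nonempty := hEne.image _
      have htne : (φ k '' E).Nonempty := hEne.image _
      obtain ⟨a0, ha0, hmin⟩ := hs.exists_isMinOn hsne
        (continuous_infDist_pt (φ k '' E)).continuousOn
      have hpos : 0 < infDist a0 (φ k '' E) :=
        (ht.isClosed.notMem_iff_infDist_pos htne).1
          (fun hmem => (Set.disjoint_left.1 (hdisj h) ha0) hmem)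
      refine ⟨infDist a0 (φ k '' E), hpos, fun _ a ha b hb => ?_⟩
      exact le_trans (hmin ha) (infDist_le_dist_of_mem hb)
  choose δf hδpos hδsep using hsep
  set δ : ℝ := Finset.univ.inf' Finset.univ_nonempty
    (fun p : Fin m × Fin m => δf p.1 p.2) with hδdef
  have hδ0 : 0 < δ := (Finset.lt_inf'_iff _).2 fun p _ => hδpos p.1 p.2
  have hδle : ∀ j k : Fin m, j ≠ k → ∀ a ∈ φ j '' E, ∀ b ∈ φ k '' E, δ ≤ dist a b := by
    intro j k h a ha b hb
    exact le_trans (Finset.inf'_le _ (Finset.mem_univ (j, k))) (hδsep j k h a ha b hb)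
  have hδD : δ ≤ diam E := by
    have h01 : (⟨0, by omega⟩ : Fin m) ≠ ⟨1, by omega⟩ := by simp [Fin.ext_iff]
    obtain ⟨a, ha⟩ := hEne.image (φ (⟨0, by omega⟩ : Fin m))
    obtain ⟨b, hb⟩ := hEne.image (φ (⟨1, by omega⟩ : Fin m))
    exact le_trans (hδle _ _ h01 a ha b hb)
      (dist_le_diam_of_mem hEc.isBounded (hsub _ ha) (hsub _ hb))
  refine ⟨π, δ, diam E, hδ0, hδD, hπE, ?_, ?_, ?_⟩
  · -- surjectivity
    intro x hx
    have hchoice : ∀ y ∈ E, ∃ (j : Fin m) (z : X), z ∈ E ∧ φ j z = y := by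
      intro y hy
      rw [hEeq] at hy
      simpa [Set.mem_iUnion] using hy
    choose jm zm hzE hzφ using hchoice
    let seq : ℕ → {y : X // y ∈ E} := fun n =>
      Nat.rec ⟨x, hx⟩ (fun _ p => ⟨zm p.1 p.2, hzE p.1 p.2⟩) n
    let σ : ℕ → Fin m := fun n => jm (seq n).1 (seq n).2
    refine ⟨σ, ?_⟩
    have hinv : ∀ n : ℕ, dustΦ φ σ n (seq n).1 = x := by
      intro n
      induction n with
      | zero => rfl
      | succ n ih =>
        have h1 : φ (σ n) ((seq (n+1)).1) = (seq n).1 := hzφ (seq n).1 (seq n).2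
        show dustΦ φ σ n (φ (σ n) ((seq (n+1)).1)) = x
        rw [h1]; exact ih
    -- the distance to x tends to zero
    set r : ℝ := Finset.univ.sup' Finset.univ_nonempty ρ with hrdef
    have hr1 : r < 1 := (Finset.sup'_lt_iff _).2 fun j _ => (hρ j).2
    have hr0 : 0 ≤ r :=
      le_trans (hρ (⟨0, by omega⟩ : Fin m)).1.le (Finset.le_sup' ρ (Finset.mem_univ _))
    have hPle : ∀ n : ℕ, (∏ i ∈ Finset.range n, ρ (σ i)) ≤ r ^ n := by
      intro n
      calc ∏ i ∈ Finset.range n, ρ (σ i)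
          ≤ ∏ i ∈ Finset.range n, r :=
            Finset.prod_le_prod (fun i _ => (hρ (σ i)).1.le)
              (fun i _ => Finset.le_sup' ρ (Finset.mem_univ _))
        _ = r ^ n := by rw [Finset.prod_const, Finset.card_range]
    have hdist : ∀ n : ℕ, dist x (π σ) ≤ r ^ n * diam E := by
      intro n
      obtain ⟨a, ha, hea⟩ := hπmem σ n
      calc dist x (π σ) = dist (dustΦ φ σ n (seq n).1) (dustΦ φ σ n a) := by
            rw [hinv n, hea]
        _ = (∏ i ∈ Finset.range n, ρ (σ i)) * dist (seq n).1 a := dustΦ_dist hsim σ n _ _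
        _ ≤ r ^ n * diam E :=
            mul_le_mul (hPle n) (dist_le_diam_of_mem hEc.isBounded (seq n).2 ha)
              dist_nonneg (pow_nonneg hr0 n)
    have hlim : Filter.Tendsto (fun n : ℕ => r ^ n * diam E) Filter.atTop (nhds 0) := by
      have := (tendsto_pow_atTop_nhds_zero_of_lt_one hr0 hr1).mul_const (diam E)
      rwa [zero_mul] at this
    have h0 : dist x (π σ) ≤ 0 := ge_of_tendsto' hlim hdist
    exact (dist_eq_zero.1 (le_antisymm h0 dist_nonneg)).symm
  · -- upper bound
    intro σ τ n hagree
    obtain ⟨a, ha, hea⟩ := hπmem σ n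
    obtain ⟨b, hb, heb⟩ := hπmem τ n
    have hbb : π τ = dustΦ φ σ n b := by
      rw [← heb]
      exact dustΦ_congr φ n (fun i hi => (hagree i hi).symm) b
    rw [← hea, hbb, dustΦ_dist hsim σ n]
    exact mul_le_mul_of_nonneg_left (dist_le_diam_of_mem hEc.isBounded ha hb) (hPpos σ n).le
  · -- lower bound
    intro σ τ n hagree hne
    obtain ⟨a, ha, hea⟩ := hπmem σ (n+1)
    obtain ⟨b, hb, heb⟩ := hπmem τ (n+1)
    have e1 : π σ = dustΦ φ σ n (φ (σ n) a) := by rw [← hea]; rfl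
    have e2 : π τ = dustΦ φ σ n (φ (τ n) b) := by
      rw [← heb]
      exact dustΦ_congr φ n (fun i hi => (hagree i hi).symm) (φ (τ n) b)
    rw [e1, e2, dustΦ_dist hsim σ n]
    exact mul_le_mul_of_nonneg_left
      (hδle (σ n) (τ n) hne _ ⟨a, ha, rfl⟩ _ ⟨b, hb, rfl⟩) (hPpos σ n).le

theorem dustlike_same_contraction_vector_lipschitz_equivalent
    (d m : ℕ) (hd : 1 ≤ d) (ρ : Fin m → ℝ)
    (hρ : IsContractionVector d m ρ)
    (E F : Set (EuclideanSpace ℝ (Fin d)))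
    (hE : IsDustLike ρ E) (hF : IsDustLike ρ F) :
    LipschitzEquivalent E F := by
  obtain ⟨hρmem, -⟩ := hρ
  rcases lt_or_ge m 2 with hm | hm
  · interval_cases m
    · -- m = 0 : E is empty, contradiction
      exfalso
      obtain ⟨⟨x, hx⟩, -, φ, -, hEeq, -⟩ := hE
      rw [hEeq] at hx
      obtain ⟨j, -⟩ := Set.mem_iUnion.1 hx
      exact j.elim0
    · -- m = 1 : E and F are singletons
      have key : ∀ (G : Set (EuclideanSpace ℝ (Fin d))), IsDustLike ρ G →
          ∀ x ∈ G, ∀ y ∈ G, x = y := by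
        intro G hG
        obtain ⟨hne, hc, φ, hs, heq, -⟩ := hG
        have hsub : ∀ x ∈ G, ∃ a ∈ G, φ 0 a = x := by
          intro x hx
          rw [heq] at hx
          simp only [Set.mem_iUnion, Set.mem_image] at hx
          obtain ⟨j, a, ha, hfa⟩ := hx
          exact ⟨a, ha, by rw [Subsingleton.elim (0 : Fin 1) j]; exact hfa⟩
        have hb := hc.isBounded
        have hdle : ∀ x ∈ G, ∀ y ∈ G, dist x y ≤ ρ 0 * diam G := by
          intro x hx y hy
          obtain ⟨a, ha, rfl⟩ := hsub x hx
          obtain ⟨b, hb', rfl⟩ := hsub y hy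
          rw [hs 0 a b]
          exact mul_le_mul_of_nonneg_left (dist_le_diam_of_mem hb ha hb') (hρmem 0).1.le
        have hdiam : diam G ≤ ρ 0 * diam G :=
          diam_le_of_forall_dist_le (mul_nonneg (hρmem 0).1.le diam_nonneg) hdle
        have h0 : diam G = 0 := by nlinarith [diam_nonneg (s := G), (hρmem 0).2]
        intro x hx y hy
        have h := dist_le_diam_of_mem hb hx hy
        rw [h0] at h
        exact dist_le_zero.1 h
      obtain ⟨x0, hx0⟩ := hE.1
      obtain ⟨y0, hy0⟩ := hF.1
      refine ⟨fun _ => y0, 1, one_pos,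
        ⟨fun x _ => hy0, fun x hx y hy _ => key E hE x hx y hy,
          fun y hy => ⟨x0, hx0, key F hF y0 hy0 y hy⟩⟩, ?_⟩
      intro x hx y hy
      have hxy : x = y := key E hE x hx y hy
      simp [hxy]
  · -- m ≥ 2
    obtain ⟨hEne, hEc, φE, hsimE, hEeq, hEdisj⟩ := hE
    obtain ⟨hFne, hFc, φF, hsimF, hFeq, hFdisj⟩ := hF
    obtain ⟨πE, δE, DE, hδE, hδDE, hπEmem, hπEsurj, hEup, hElow⟩ :=
      coding_exists hm hρmem hEne hEc hsimE hEeq hEdisj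
    obtain ⟨πF, δF, DF, hδF, hδDF, hπFmem, hπFsurj, hFup, hFlow⟩ :=
      coding_exists hm hρmem hFne hFc hsimF hFeq hFdisj
    have hPpos : ∀ (σ : ℕ → Fin m) (n : ℕ), 0 < ∏ i ∈ Finset.range n, ρ (σ i) :=
      fun σ n => Finset.prod_pos fun i _ => (hρmem (σ i)).1
    have hinj : ∀ (π : (ℕ → Fin m) → EuclideanSpace ℝ (Fin d)) (δ : ℝ), 0 < δ →
        (∀ σ τ : ℕ → Fin m, ∀ n : ℕ, (∀ i < n, σ i = τ i) → σ n ≠ τ n →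
          (∏ i ∈ Finset.range n, ρ (σ i)) * δ ≤ dist (π σ) (π τ)) →
        ∀ σ τ, π σ = π τ → σ = τ := by
      intro π δ hδ hlow σ τ h
      by_contra hne
      have hex : ∃ n, σ n ≠ τ n := Function.ne_iff.1 hne
      have hlt : ∀ i < Nat.find hex, σ i = τ i := fun i hi => not_not.1 (Nat.find_min hex hi)
      have h1 := hlow σ τ (Nat.find hex) hlt (Nat.find_spec hex)
      rw [h, dist_self] at h1
      have h2 : 0 < (∏ i ∈ Finset.range (Nat.find hex), ρ (σ i)) * δ :=
        mul_pos (hPpos σ _) hδ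
      linarith
    have hinjE := hinj πE δE hδE hElow
    have hinjF := hinj πF δF hδF hFlow
    choose code hcode using hπEsurj
    have hDE : 0 < DE := lt_of_lt_of_le hδE hδDE
    have hDF : 0 < DF := lt_of_lt_of_le hδF hδDF
    set C : ℝ := max (DF / δE) (DE / δF) with hCdef
    have hC : 0 < C := lt_of_lt_of_le (div_pos hDF hδE) (le_max_left _ _)
    classical
    refine ⟨fun x => if hx : x ∈ E then πF (code x hx) else x, C, hC, ⟨?_, ?_, ?_⟩, ?_⟩
    · intro x hx
      simp only [dif_pos hx]
      exact hπFmem _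
    · intro x hx y hy h
      simp only [dif_pos hx, dif_pos hy] at h
      have h2 := hinjF _ _ h
      calc x = πE (code x hx) := (hcode x hx).symm
        _ = πE (code y hy) := by rw [h2]
        _ = y := hcode y hy
    · intro y hy
      obtain ⟨σ, hσ⟩ := hπFsurj y hy
      have hx : πE σ ∈ E := hπEmem σ
      refine ⟨πE σ, hx, ?_⟩
      simp only [dif_pos hx]
      have : code (πE σ) hx = σ := hinjE _ _ (hcode (πE σ) hx)
      rw [this, hσ]
    · intro x hx y hy
      simp only [dif_pos hx, dif_pos hy]
      by_cases hxy : x = y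
      · subst hxy
        simp
      · have hστ : code x hx ≠ code y hy := by
          intro h
          exact hxy (by rw [← hcode x hx, ← hcode y hy, h])
        have hex : ∃ n, code x hx n ≠ code y hy n := Function.ne_iff.1 hστ
        set n := Nat.find hex with hn
        have hagree : ∀ i < n, code x hx i = code y hy i :=
          fun i hi => not_not.1 (Nat.find_min hex hi)
        have hdiff : code x hx n ≠ code y hy n := Nat.find_spec hex
        set P : ℝ := ∏ i ∈ Finset.range n, ρ (code x hx i) with hPdef
        have hP : 0 < P := hPpos _ _
        have h1 : P * δE ≤ dist x y := by
          have := hElow (code x hx) (code y hy) n hagree hdiff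
          rwa [hcode x hx, hcode y hy] at this
        have h2 : dist x y ≤ P * DE := by
          have := hEup (code x hx) (code y hy) n hagree
          rwa [hcode x hx, hcode y hy] at this
        have h3 : P * δF ≤ dist (πF (code x hx)) (πF (code y hy)) :=
          hFlow (code x hx) (code y hy) n hagree hdiff
        have h4 : dist (πF (code x hx)) (πF (code y hy)) ≤ P * DF :=
          hFup (code x hx) (code y hy) n hagree
        constructor
        · have hCge : DE / δF ≤ C := le_max_right _ _
          have hinv : C⁻¹ ≤ δF / DE := by
            have hq : 0 < DE / δF := div_pos hDE hδF
            have := inv_anti₀ hq hCge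
            rwa [inv_div] at this
          calc C⁻¹ * dist x y ≤ (δF / DE) * (P * DE) :=
                mul_le_mul hinv h2 dist_nonneg (div_nonneg hδF.le hDE.le)
            _ = P * δF := by field_simp
            _ ≤ dist (πF (code x hx)) (πF (code y hy)) := h3
        · calc dist (πF (code x hx)) (πF (code y hy)) ≤ P * DF := h4
            _ = (DF / δE) * (P * δE) := by field_simp
            _ ≤ C * dist x y :=
                mul_le_mul (le_max_left _ _) h1 (mul_nonneg hP.le hδE.le) hC.le
end
end

section
/- Let ρ = (ρ₁, …, ρ_m) be a contraction vector for ℝ^d. Then d_ρ is a metric on Σ_m, and for every dust-like self-similar set E ⊆ ℝ^d with contraction vector ρ there exist a bijection f : Σ_m → E and a constant C > 0 such that C⁻¹·d_ρ(z, w) ≤ ‖f(z) − f(w)‖ ≤ C·d_ρ(z, w) for all z, w ∈ Σ_m. -/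
open Set Metric MeasureTheory

noncomputable section

/- The metric `d_ρ` on the symbolic space `Σ_m = (ℕ → Fin m)`:
`d_ρ(z,z) = 0`, and for `z ≠ w`, `d_ρ(z,w)` is the product of `ρ` over the
longest common prefix of `z` and `w` (which is `1` if `z(1) ≠ w(1)`). -/
open Classical in
def dRho {m : ℕ} (ρ : Fin m → ℝ) (z w : ℕ → Fin m) : ℝ :=
  if h : ∃ k, z k ≠ w k then ∏ j ∈ Finset.range (Nat.find h), ρ (z j) else 0

section MyAux

variable {X : Type*} [MetricSpace X] {m : ℕ}

lemma mySep {s t : Set X} (hs : IsCompact s) (ht : IsClosed t) (h : Disjoint s t) :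
    ∃ δ > 0, ∀ a ∈ s, ∀ b ∈ t, δ ≤ dist a b := by
  obtain ⟨δ, hδ, hdis⟩ := h.exists_thickenings hs ht
  refine ⟨δ, hδ, fun a ha b hb => ?_⟩
  by_contra hlt
  push_neg at hlt
  exact (hdis.le_bot ⟨Metric.mem_thickening_iff.2 ⟨a, ha, by rwa [dist_comm]⟩,
    Metric.self_subset_thickening hδ t hb⟩)

lemma myProd_pos {ρ : Fin m → ℝ} (hρ : ∀ j, ρ j ∈ Set.Ioo (0:ℝ) 1) (z : ℕ → Fin m) (n : ℕ) :
    0 < ∏ j ∈ Finset.range n, ρ (z j) :=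
  Finset.prod_pos fun j _ => (hρ (z j)).1

lemma myProd_anti {ρ : Fin m → ℝ} (hρ : ∀ j, ρ j ∈ Set.Ioo (0:ℝ) 1) (z : ℕ → Fin m)
    {a b : ℕ} (h : a ≤ b) :
    ∏ j ∈ Finset.range b, ρ (z j) ≤ ∏ j ∈ Finset.range a, ρ (z j) := by
  induction b, h using Nat.le_induction with
  | base => exact le_refl _
  | succ n hn ih =>
      rw [Finset.prod_range_succ]
      calc (∏ j ∈ Finset.range n, ρ (z j)) * ρ (z n)
          ≤ (∏ j ∈ Finset.range n, ρ (z j)) * 1 := by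
            exact mul_le_mul_of_nonneg_left (hρ (z n)).2.le (myProd_pos hρ z n).le
        _ = ∏ j ∈ Finset.range n, ρ (z j) := mul_one _
        _ ≤ _ := ih

lemma dRho_eq_prod {ρ : Fin m → ℝ} {z w : ℕ → Fin m}
    [DecidablePred fun k => z k ≠ w k] (h : ∃ k, z k ≠ w k) :
    dRho ρ z w = ∏ j ∈ Finset.range (Nat.find h), ρ (z j) := by
  rw [dRho, dif_pos h]; congr!

lemma dRho_nonneg {ρ : Fin m → ℝ} (hρ : ∀ j, ρ j ∈ Set.Ioo (0:ℝ) 1) (z w : ℕ → Fin m) :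
    0 ≤ dRho ρ z w := by
  classical
  rw [dRho]
  split
  · exact (myProd_pos hρ z _).le
  · exact le_refl _

lemma dRho_self (ρ : Fin m → ℝ) (z : ℕ → Fin m) : dRho ρ z z = 0 := by
  rw [dRho, dif_neg]; simp

lemma ne_exists {z w : ℕ → Fin m} (h : z ≠ w) : ∃ k, z k ≠ w k := by
  by_contra hc; push_neg at hc; exact h (funext hc)

lemma dRho_pos {ρ : Fin m → ℝ} (hρ : ∀ j, ρ j ∈ Set.Ioo (0:ℝ) 1) {z w : ℕ → Fin m}
    (h : z ≠ w) : 0 < dRho ρ z w := by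
  classical
  rw [dRho_eq_prod (ne_exists h)]
  exact myProd_pos hρ z _

lemma dRho_comm (ρ : Fin m → ℝ) (z w : ℕ → Fin m) : dRho ρ z w = dRho ρ w z := by
  classical
  by_cases h : z = w
  · subst h; rfl
  have h1 := ne_exists h
  have h2 := ne_exists (Ne.symm h)
  rw [dRho_eq_prod h1, dRho_eq_prod h2]
  have hk : Nat.find h1 = Nat.find h2 := by
    refine le_antisymm (Nat.find_le (Nat.find_spec h2).symm) (Nat.find_le (Nat.find_spec h1).symm)
  rw [hk]
  refine Finset.prod_congr rfl fun j hj => ?_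
  rw [Finset.mem_range, ← hk] at hj
  have := Nat.find_min h1 hj
  push_neg at this
  rw [this]

lemma dRho_triangle {ρ : Fin m → ℝ} (hρ : ∀ j, ρ j ∈ Set.Ioo (0:ℝ) 1)
    (x y z : ℕ → Fin m) : dRho ρ x z ≤ dRho ρ x y + dRho ρ y z := by
  classical
  by_cases hxz : x = z
  · subst hxz; rw [dRho_self]
    exact add_nonneg (dRho_nonneg hρ _ _) (dRho_nonneg hρ _ _)
  by_cases hxy : x = y
  · subst hxy; rw [dRho_self, zero_add]
  by_cases hyz : y = z
  · subst hyz; rw [dRho_self, add_zero]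
  have h1 := ne_exists hxy
  have h2 := ne_exists hyz
  have h3 := ne_exists hxz
  have hmin : min (Nat.find h1) (Nat.find h2) ≤ Nat.find h3 := by
    by_contra hlt
    push_neg at hlt
    have hx : x (Nat.find h3) = y (Nat.find h3) := by
      have := Nat.find_min h1 (lt_of_lt_of_le hlt (min_le_left _ _))
      push_neg at this; exact this
    have hy : y (Nat.find h3) = z (Nat.find h3) := by
      have := Nat.find_min h2 (lt_of_lt_of_le hlt (min_le_right _ _))
      push_neg at this; exact this
    exact (Nat.find_spec h3) (hx.trans hy)
  rw [dRho_eq_prod h1, dRho_eq_prod h2, dRho_eq_prod h3]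
  rcases le_total (Nat.find h1) (Nat.find h2) with hc | hc
  · have h4 : ∏ j ∈ Finset.range (Nat.find h3), ρ (x j)
        ≤ ∏ j ∈ Finset.range (Nat.find h1), ρ (x j) :=
      myProd_anti hρ x (le_trans (le_of_eq (min_eq_left hc).symm) hmin)
    have := myProd_pos hρ y (Nat.find h2)
    linarith
  · have h4 : ∏ j ∈ Finset.range (Nat.find h3), ρ (x j)
        ≤ ∏ j ∈ Finset.range (Nat.find h2), ρ (x j) :=
      myProd_anti hρ x (le_trans (le_of_eq (min_eq_right hc).symm) hmin)
    have heq : ∏ j ∈ Finset.range (Nat.find h2), ρ (x j)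
        = ∏ j ∈ Finset.range (Nat.find h2), ρ (y j) := by
      refine Finset.prod_congr rfl fun j hj => ?_
      rw [Finset.mem_range] at hj
      have := Nat.find_min h1 (lt_of_lt_of_le hj hc)
      push_neg at this
      rw [this]
    have := myProd_pos hρ x (Nat.find h1)
    linarith

end MyAux

section Psi

variable {X : Type*} [MetricSpace X] {m : ℕ}

def psiComp (φ : Fin m → X → X) (z : ℕ → Fin m) : ℕ → X → X
  | 0 => id
  | n+1 => fun x => psiComp φ z n (φ (z n) x)

lemma psiComp_sim {ρ : Fin m → ℝ} {φ : Fin m → X → X}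
    (hφ : ∀ j, IsSimilarity (ρ j) (φ j)) (z : ℕ → Fin m) (n : ℕ) :
    IsSimilarity (∏ j ∈ Finset.range n, ρ (z j)) (psiComp φ z n) := by
  induction n with
  | zero => intro x y; simp [psiComp]
  | succ n ih =>
      intro x y
      calc dist (psiComp φ z n (φ (z n) x)) (psiComp φ z n (φ (z n) y))
          = (∏ j ∈ Finset.range n, ρ (z j)) * dist (φ (z n) x) (φ (z n) y) := ih _ _
        _ = (∏ j ∈ Finset.range n, ρ (z j)) * (ρ (z n) * dist x y) := by rw [hφ (z n) x y]
        _ = (∏ j ∈ Finset.range (n+1), ρ (z j)) * dist x y := by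
            rw [Finset.prod_range_succ]; ring

lemma psiComp_congr {φ : Fin m → X → X} {z w : ℕ → Fin m} (n : ℕ)
    (h : ∀ j < n, z j = w j) : psiComp φ z n = psiComp φ w n := by
  induction n with
  | zero => rfl
  | succ n ih =>
      funext x
      show psiComp φ z n (φ (z n) x) = psiComp φ w n (φ (w n) x)
      rw [h n (Nat.lt_succ_self n), ih (fun j hj => h j (hj.trans (Nat.lt_succ_self n)))]

lemma myProd_le_pow {ρ : Fin m → ℝ} {r : ℝ} (hρ : ∀ j, ρ j ∈ Set.Ioo (0:ℝ) 1)
    (hr : ∀ j, ρ j ≤ r) (z : ℕ → Fin m) (n : ℕ) :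
    ∏ j ∈ Finset.range n, ρ (z j) ≤ r ^ n := by
  induction n with
  | zero => simp
  | succ n ih =>
      rw [Finset.prod_range_succ, pow_succ]
      exact mul_le_mul ih (hr (z n)) (hρ (z n)).1.le
        (le_trans (myProd_pos hρ z n).le ih)

end Psi


open Filter Topology in
theorem dRho_metric_and_biLipschitz_to_dustlike
    (d m : ℕ) (hd : 1 ≤ d) (ρ : Fin m → ℝ)
    (hρ : IsContractionVector d m ρ)
    (E : Set (EuclideanSpace ℝ (Fin d))) (hE : IsDustLike ρ E) :
    (∀ z w : ℕ → Fin m, dRho ρ z w = 0 ↔ z = w) ∧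
    (∀ z w : ℕ → Fin m, dRho ρ z w = dRho ρ w z) ∧
    (∀ x y z : ℕ → Fin m, dRho ρ x z ≤ dRho ρ x y + dRho ρ y z) ∧
    ∃ (f : (ℕ → Fin m) → EuclideanSpace ℝ (Fin d)) (C : ℝ), 0 < C ∧
      Set.BijOn f Set.univ E ∧
      ∀ z w : ℕ → Fin m,
        C⁻¹ * dRho ρ z w ≤ dist (f z) (f w) ∧ dist (f z) (f w) ≤ C * dRho ρ z w := by
  obtain ⟨hρ01, -⟩ := hρ
  obtain ⟨hEne, hEcomp, φ, hφ, hEeq, hdisj⟩ := hE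
  have hm : 0 < m := by
    rcases Nat.eq_zero_or_pos m with h0 | h
    · exfalso
      obtain ⟨x, hx⟩ := hEne
      subst h0
      rw [hEeq] at hx
      simpa using hx
    · exact h
  haveI : Nonempty (Fin m) := ⟨⟨0, hm⟩⟩
  refine ⟨?_, fun z w => dRho_comm ρ z w, fun x y z => dRho_triangle hρ01 x y z, ?_⟩
  · intro z w
    constructor
    · intro h0
      by_contra hne
      exact absurd h0 (ne_of_gt (dRho_pos hρ01 hne))
    · rintro rfl
      exact dRho_self ρ z
  -- the bi-Lipschitz coding map
  have hsub : ∀ j, φ j '' E ⊆ E := by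
    intro j
    have h := Set.subset_iUnion (fun j => φ j '' E) j
    rwa [← hEeq] at h
  have hφcont : ∀ j, Continuous (φ j) := by
    intro j
    have : LipschitzWith (ρ j).toNNReal (φ j) := by
      refine LipschitzWith.of_dist_le_mul fun x y => ?_
      rw [hφ j x y]
      exact mul_le_mul_of_nonneg_right (Real.le_coe_toNNReal _) dist_nonneg
    exact this.continuous
  have hpsicont : ∀ (z : ℕ → Fin m) (n : ℕ), Continuous (psiComp φ z n) := by
    intro z n
    induction n with
    | zero => exact continuous_id
    | succ n ih => exact ih.comp (hφcont (z n))
  set K : (ℕ → Fin m) → ℕ → Set (EuclideanSpace ℝ (Fin d)) :=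
    fun z n => psiComp φ z n '' E with hK
  have hK0 : ∀ z, K z 0 = E := fun z => Set.image_id E
  have hKmono : ∀ z n, K z (n+1) ⊆ K z n := by
    rintro z n x ⟨a, ha, rfl⟩
    exact ⟨φ (z n) a, hsub (z n) ⟨a, ha, rfl⟩, rfl⟩
  have hKcompact : ∀ z n, IsCompact (K z n) := fun z n => hEcomp.image (hpsicont z n)
  have hKne : ∀ z, (⋂ n, K z n).Nonempty := by
    intro z
    refine IsCompact.nonempty_iInter_of_sequence_nonempty_isCompact_isClosed _
      (hKmono z) (fun n => hEne.image _) (hKcompact z 0) (fun n => (hKcompact z n).isClosed)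
  choose f hf using hKne
  have hfK : ∀ z n, f z ∈ K z n := fun z n => Set.mem_iInter.1 (hf z) n
  have hfE : ∀ z, f z ∈ E := fun z => (hK0 z) ▸ hfK z 0
  -- the separation constant
  have hδex : ∀ p : Fin m × Fin m, ∃ δ > 0,
      p.1 ≠ p.2 → ∀ a ∈ φ p.1 '' E, ∀ b ∈ φ p.2 '' E, δ ≤ dist a b := by
    rintro ⟨j, k⟩
    by_cases hjk : j = k
    · exact ⟨1, one_pos, fun h => absurd hjk h⟩
    · obtain ⟨δ, hδ0, hsep⟩ := mySep (hEcomp.image (hφcont j))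
        (hEcomp.image (hφcont k)).isClosed (hdisj hjk)
      exact ⟨δ, hδ0, fun _ => hsep⟩
  choose δf hδf0 hδfsep using hδex
  set δ : ℝ := Finset.univ.inf' Finset.univ_nonempty δf with hδdef
  have hδpos : 0 < δ := by
    rw [hδdef, Finset.lt_inf'_iff]
    exact fun p _ => hδf0 p
  have hδle : ∀ p, δ ≤ δf p := fun p => Finset.inf'_le _ (Finset.mem_univ p)
  set D : ℝ := Metric.diam E with hDdef
  set C : ℝ := max (max D δ⁻¹) 1 with hCdef
  have hC1 : (1:ℝ) ≤ C := le_max_right _ _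
  have hCpos : 0 < C := lt_of_lt_of_le one_pos hC1
  have hDC : D ≤ C := le_trans (le_max_left _ _) (le_max_left _ _)
  have hCinv : C⁻¹ ≤ δ := by
    have h1 : δ⁻¹ ≤ C := le_trans (le_max_right _ _) (le_max_left _ _)
    calc C⁻¹ ≤ (δ⁻¹)⁻¹ := by gcongr
      _ = δ := inv_inv δ
  -- key distance estimates
  have hdist : ∀ z w : ℕ → Fin m, z ≠ w →
      δ * dRho ρ z w ≤ dist (f z) (f w) ∧ dist (f z) (f w) ≤ D * dRho ρ z w := by
    intro z w hzw
    have hex := ne_exists hzw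
    set k := Nat.find hex with hkdef
    have hagree : ∀ j < k, z j = w j := by
      intro j hj
      have := Nat.find_min hex hj
      push_neg at this
      exact this
    have hzkwk : z k ≠ w k := Nat.find_spec hex
    obtain ⟨a, ha, hfa⟩ := hfK z (k+1)
    obtain ⟨b, hb, hfb⟩ := hfK w (k+1)
    have hcongr : psiComp φ w k = psiComp φ z k :=
      psiComp_congr k (fun j hj => (hagree j hj).symm)
    have hfa' : f z = psiComp φ z k (φ (z k) a) := hfa.symm
    have hfb' : f w = psiComp φ z k (φ (w k) b) := by
      rw [← hfb]
      show psiComp φ w k (φ (w k) b) = _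
      rw [hcongr]
    have hsim := psiComp_sim hφ z k
    have hdisteq : dist (f z) (f w)
        = (∏ j ∈ Finset.range k, ρ (z j)) * dist (φ (z k) a) (φ (w k) b) := by
      rw [hfa', hfb']
      exact hsim _ _
    have hdrho : dRho ρ z w = ∏ j ∈ Finset.range k, ρ (z j) := dRho_eq_prod hex
    constructor
    · rw [hdisteq, hdrho, mul_comm δ _]
      refine mul_le_mul_of_nonneg_left ?_ (myProd_pos hρ01 z k).le
      calc δ ≤ δf (z k, w k) := hδle _
        _ ≤ dist (φ (z k) a) (φ (w k) b) :=
            hδfsep (z k, w k) hzkwk _ ⟨a, ha, rfl⟩ _ ⟨b, hb, rfl⟩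
    · rw [hdisteq, hdrho, mul_comm D _]
      refine mul_le_mul_of_nonneg_left ?_ (myProd_pos hρ01 z k).le
      exact Metric.dist_le_diam_of_mem hEcomp.isBounded
        (hsub (z k) ⟨a, ha, rfl⟩) (hsub (w k) ⟨b, hb, rfl⟩)
  -- uniqueness of intersection point
  set r : ℝ := Finset.univ.sup' Finset.univ_nonempty ρ with hrdef
  have hr1 : r < 1 := by
    rw [hrdef, Finset.sup'_lt_iff]
    exact fun j _ => (hρ01 j).2
  have hrle : ∀ j, ρ j ≤ r := fun j => Finset.le_sup' ρ (Finset.mem_univ j)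
  have hr0 : 0 ≤ r := le_trans (hρ01 ⟨0, hm⟩).1.le (hrle ⟨0, hm⟩)
  have hdiamK : ∀ (z : ℕ → Fin m) (n : ℕ) (x y : EuclideanSpace ℝ (Fin d)),
      x ∈ K z n → y ∈ K z n → dist x y ≤ r ^ n * D := by
    rintro z n x y ⟨a, ha, rfl⟩ ⟨b, hb, rfl⟩
    rw [psiComp_sim hφ z n a b]
    have h1 : dist a b ≤ D := Metric.dist_le_diam_of_mem hEcomp.isBounded ha hb
    have h2 : ∏ j ∈ Finset.range n, ρ (z j) ≤ r ^ n := myProd_le_pow hρ01 hrle z n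
    exact mul_le_mul h2 h1 dist_nonneg (pow_nonneg hr0 n)
  have huniq : ∀ (z : ℕ → Fin m) (x : EuclideanSpace ℝ (Fin d)),
      x ∈ ⋂ n, K z n → x = f z := by
    intro z x hx
    have hd : ∀ n, dist x (f z) ≤ r ^ n * D :=
      fun n => hdiamK z n _ _ (Set.mem_iInter.1 hx n) (hfK z n)
    have hlim : Tendsto (fun n => r ^ n * D) atTop (nhds 0) := by
      simpa using (tendsto_pow_atTop_nhds_zero_of_lt_one hr0 hr1).mul_const D
    have : dist x (f z) ≤ 0 := ge_of_tendsto' hlim hd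
    exact dist_le_zero.1 this
  refine ⟨f, C, hCpos, ⟨fun z _ => hfE z, ?_, ?_⟩, ?_⟩
  · -- injectivity
    intro z _ w _ hfzw
    by_contra hzw
    have h1 := (hdist z w hzw).1
    rw [hfzw, dist_self] at h1
    have h2 := mul_pos hδpos (dRho_pos hρ01 hzw)
    linarith
  · -- surjectivity
    intro x hx
    have hstep : ∀ y : {y : EuclideanSpace ℝ (Fin d) // y ∈ E},
        ∃ p : Fin m × {y : EuclideanSpace ℝ (Fin d) // y ∈ E}, φ p.1 p.2.1 = y.1 := by
      rintro ⟨y, hy⟩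
      rw [hEeq] at hy
      obtain ⟨j, hj⟩ := Set.mem_iUnion.1 hy
      obtain ⟨a, ha, hay⟩ := hj
      exact ⟨(j, ⟨a, ha⟩), hay⟩
    choose F hF using hstep
    set pt : ℕ → {y : EuclideanSpace ℝ (Fin d) // y ∈ E} :=
      fun n => (fun q => (F q).2)^[n] ⟨x, hx⟩ with hptdef
    set z : ℕ → Fin m := fun n => (F (pt n)).1 with hzdef
    have hpt : ∀ n, pt (n+1) = (F (pt n)).2 := by
      intro n
      rw [hptdef]
      exact Function.iterate_succ_apply' _ _ _
    have hx_in : ∀ n, psiComp φ z n (pt n).1 = x := by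
      intro n
      induction n with
      | zero => rfl
      | succ n ih =>
          show psiComp φ z n (φ (z n) (pt (n+1)).1) = x
          have : φ (z n) (pt (n+1)).1 = (pt n).1 := by
            rw [hpt n]
            exact hF (pt n)
          rw [this, ih]
    have hxK : x ∈ ⋂ n, K z n :=
      Set.mem_iInter.2 fun n => ⟨(pt n).1, (pt n).2, hx_in n⟩
    exact ⟨z, Set.mem_univ z, (huniq z x hxK).symm⟩
  · -- bi-Lipschitz bounds
    intro z w
    by_cases hzw : z = w
    · subst hzw
      rw [dist_self, dRho_self]
      constructor <;> simp
    · obtain ⟨hlow, hhigh⟩ := hdist z w hzw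
      have hdr := dRho_nonneg hρ01 z w
      constructor
      · calc C⁻¹ * dRho ρ z w ≤ δ * dRho ρ z w := mul_le_mul_of_nonneg_right hCinv hdr
          _ ≤ dist (f z) (f w) := hlow
      · calc dist (f z) (f w) ≤ D * dRho ρ z w := hhigh
          _ ≤ C * dRho ρ z w := mul_le_mul_of_nonneg_right hDC hdr
end
end

section
/- Let ρ = (ρ₁, …, ρ_m) and τ = (τ₁, …, τ_n) be contraction vectors for ℝ^d, suppose some E ∈ D(ρ) and F ∈ D(τ) are Lipschitz equivalent, and let s > 0 be the common Hausdorff dimension, i.e. ρ₁^s + ⋯ + ρ_m^s = 1. Then for every r > s, (ρ₁^r, …, ρ_m^r) and (τ₁^r, …, τ_n^r) are again contraction vectors for ℝ^d, and any E' ∈ D(ρ₁^r, …, ρ_m^r) and F' ∈ D(τ₁^r, …, τ_n^r) are Lipschitz equivalent. -/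
open Set Metric MeasureTheory

noncomputable section

/-!
Code the points of `E` and `E'` by sequences `x : ℕ → Fin m`. If two codes first differ at
index `k`, the distance of the coded points of `E` is comparable to `ρ (x 0) ⋯ ρ (x (k - 1))`,
and that of the coded points of `E'` to the `r`-th power of this product. Hence `E'` is
bi-Lipschitz to `E` with the snowflake metric `dist ^ r`, likewise `F'` to `F`, and a
bi-Lipschitz bijection `E → F` stays bi-Lipschitz for `dist ^ r`; this gives `E' ∼ F'`.

That `(τ j ^ r)` is a contraction vector needs `∑ τ j ^ s ≤ 1`. Otherwise `∑ τ j ^ t > 1` for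
some `t > s`, and then `F` contains `≳ ε ^ (-t)` points at mutual distance `> δ ε` (for a fixed
`δ > 0`), while `E`, hence its Lipschitz image `F`, is covered by `≲ ε ^ (-s)` sets of
diameter `< δ ε`.
-/

open Filter Topology Asymptotics
open scoped NNReal Finset

variable {X : Type*} {m : ℕ}

lemma pow_lt_div_of_pow_succ_lt {c r ε : ℝ} {N : ℕ} (hc : 0 ≤ c) (hr : 0 < r) (hrc : r ≤ c)
    (h : c ^ (N + 1) < ε) : c ^ N < ε / r := by
  rw [lt_div_iff₀ hr]
  calc c ^ N * r ≤ c ^ N * c := by gcongr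
    _ = c ^ (N + 1) := (pow_succ c N).symm
    _ < ε := h

lemma exists_lt_sum_rpow {n : ℕ} {τ : Fin n → ℝ} (hτ : ∀ j, 0 < τ j) {s b : ℝ}
    (h : b < ∑ j, τ j ^ s) : ∃ t, b < ∑ j, τ j ^ t ∧ s < t := by
  have hcont : Continuous fun u : ℝ => ∑ j, τ j ^ u :=
    continuous_finsetSum _ fun j _ => Real.continuous_const_rpow (hτ j).ne'
  exact ((((hcont.tendsto s).eventually (lt_mem_nhds h)).filter_mono
    (nhdsWithin_le_nhds (s := Ioi s))).and self_mem_nhdsWithin).exists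

lemma nonpos_of_forall_le_rpow {b p ε₀ : ℝ} (hp : 0 < p) (hε₀ : 0 < ε₀)
    (h : ∀ ε, 0 < ε → ε ≤ ε₀ → b ≤ ε ^ p) : b ≤ 0 := by
  have hlim : Tendsto (fun ε : ℝ => ε ^ p) (𝓝[>] 0) (𝓝 0) := by
    have := (Real.continuousAt_rpow_const 0 p (Or.inr hp.le)).tendsto
    rw [Real.zero_rpow hp.ne'] at this
    exact this.mono_left nhdsWithin_le_nhds
  exact ge_of_tendsto hlim (mem_of_superset (Ioc_mem_nhdsGT hε₀) fun ε hε => h ε hε.1 hε.2)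

lemma rpow_le_rpow_sub_of_card_bounds {b ε s t N M : ℝ} (hb : 0 ≤ b) (hε : 0 < ε)
    (hN : 1 ≤ N * ε ^ t) (hNM : N ≤ M) (hM : M * (b * ε) ^ s ≤ 1) : b ^ s ≤ ε ^ (t - s) := by
  have hW := Real.rpow_nonneg (mul_nonneg hb hε.le) s
  have hε0 : (0 : ℝ) ≤ ε ^ t := Real.rpow_nonneg hε.le t
  refine le_of_mul_le_mul_right ?_ (Real.rpow_pos_of_pos hε s)
  rw [← Real.rpow_add hε, sub_add_cancel, ← Real.mul_rpow hb hε.le]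
  calc (b * ε) ^ s ≤ (b * ε) ^ s * (M * ε ^ t) :=
        le_mul_of_one_le_right hW (hN.trans (mul_le_mul_of_nonneg_right hNM hε0))
    _ = M * (b * ε) ^ s * ε ^ t := by ring
    _ ≤ ε ^ t := mul_le_of_le_one_left hε0 hM

-- `prefixMap φ x k = φ (x 0) ∘ ⋯ ∘ φ (x (k - 1))`
def prefixMap (φ : Fin m → X → X) (x : ℕ → Fin m) : ℕ → X → X
  | 0 => id
  | k + 1 => prefixMap φ x k ∘ φ (x k)

lemma prefixMap_succ' (φ : Fin m → X → X) (x : ℕ → Fin m) (k : ℕ) :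
    prefixMap φ x (k + 1) = φ (x 0) ∘ prefixMap φ (fun i => x (i + 1)) k := by
  induction k with
  | zero => rfl
  | succ k ih => rw [prefixMap, ih]; rfl

lemma prefixMap_congr (φ : Fin m → X → X) {x y : ℕ → Fin m} {k : ℕ}
    (hxy : ∀ i < k, x i = y i) : prefixMap φ x k = prefixMap φ y k := by
  induction k with
  | zero => rfl
  | succ k ih =>
    simp only [prefixMap, ih fun i hi => hxy i (hi.trans k.lt_succ_self), hxy k k.lt_succ_self]

-- `firstDiff x x = 0`, so the diagonal needs its own case.
open Classical in
def commonWeight (ρ : Fin m → ℝ) (x y : ℕ → Fin m) : ℝ :=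
  if x = y then 0 else ∏ i ∈ Finset.range (PiNat.firstDiff x y), ρ (x i)

lemma commonWeight_rpow {ρ : Fin m → ℝ} (hρ : ∀ j, 0 ≤ ρ j) {r : ℝ} (hr : r ≠ 0)
    (x y : ℕ → Fin m) : commonWeight (fun j => ρ j ^ r) x y = commonWeight ρ x y ^ r := by
  unfold commonWeight
  split_ifs
  · exact (Real.zero_rpow hr).symm
  · exact Real.finsetProd_rpow _ _ (fun i _ => hρ _) r

lemma commonWeight_nonneg {ρ : Fin m → ℝ} (hρ : ∀ j, 0 ≤ ρ j) (x y : ℕ → Fin m) :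
    0 ≤ commonWeight ρ x y := by
  unfold commonWeight
  split_ifs
  exacts [le_rfl, Finset.prod_nonneg fun i _ => hρ _]

variable [MetricSpace X]

lemma IsSimilarity.lipschitzWith {r : ℝ} {φ : X → X} (h : IsSimilarity r φ) :
    LipschitzWith r.toNNReal φ :=
  LipschitzWith.of_dist_le_mul fun x y =>
    (h x y).trans_le (mul_le_mul_of_nonneg_right (Real.le_coe_toNNReal r) dist_nonneg)

lemma IsSimilarity.injective {r : ℝ} {φ : X → X} (h : IsSimilarity r φ) (hr : 0 < r) :
    Function.Injective φ := fun x y hxy => by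
  simpa [hr.ne', hxy] using (h x y).symm

lemma IsSimilarity.comp {r r' : ℝ} {φ ψ : X → X} (hφ : IsSimilarity r φ)
    (hψ : IsSimilarity r' ψ) : IsSimilarity (r * r') (φ ∘ ψ) := fun x y => by
  simp only [Function.comp_apply, hφ _ _, hψ _ _, mul_assoc]

lemma isSimilarity_prefixMap {ρ : Fin m → ℝ} {φ : Fin m → X → X}
    (hφ : ∀ j, IsSimilarity (ρ j) (φ j)) (x : ℕ → Fin m) (k : ℕ) :
    IsSimilarity (∏ i ∈ Finset.range k, ρ (x i)) (prefixMap φ x k) := by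
  induction k with
  | zero => intro u v; simp [prefixMap]
  | succ k ih => rw [Finset.prod_range_succ]; exact ih.comp (hφ (x k))

def IsDiamCover (η : ℝ) (E : Set X) (U : Finset (Set X)) : Prop :=
  E ⊆ ⋃₀ ↑U ∧ ∀ A ∈ U, A ⊆ E ∧ ∀ u ∈ A, ∀ v ∈ A, dist u v ≤ η

lemma IsDiamCover.mono {η η' : ℝ} {E : Set X} {U : Finset (Set X)} (h : IsDiamCover η E U)
    (hη : η ≤ η') : IsDiamCover η' E U :=
  ⟨h.1, fun A hA => ⟨(h.2 A hA).1, fun u hu v hv => ((h.2 A hA).2 u hu v hv).trans hη⟩⟩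

lemma IsDiamCover.image {η : ℝ} {E : Set X} {U : Finset (Set X)} (h : IsDiamCover η E U)
    {f : X → X} {K : ℝ≥0} (hf : LipschitzOnWith K f E) :
    IsDiamCover (K * η) (f '' E) (U.image (f '' ·)) := by
  classical
  refine ⟨?_, ?_⟩
  · rintro _ ⟨x, hx, rfl⟩
    obtain ⟨A, hA, hxA⟩ := mem_sUnion.1 (h.1 hx)
    exact mem_sUnion.2 ⟨f '' A, by simpa using ⟨A, hA, rfl⟩, mem_image_of_mem f hxA⟩
  · simp only [Finset.mem_image]
    rintro _ ⟨A, hA, rfl⟩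
    refine ⟨image_mono (h.2 A hA).1, ?_⟩
    rintro _ ⟨x, hx, rfl⟩ _ ⟨y, hy, rfl⟩
    calc dist (f x) (f y) ≤ K * dist x y :=
          hf.dist_le_mul x ((h.2 A hA).1 hx) y ((h.2 A hA).1 hy)
      _ ≤ K * η := by gcongr; exact (h.2 A hA).2 x hx y hy

theorem IsDiamCover.card_le_of_pairwise_lt_dist {η : ℝ} {E : Set X} {U : Finset (Set X)}
    (hU : IsDiamCover η E U) {P : Finset X} (hPE : (P : Set X) ⊆ E)
    (hP : (P : Set X).Pairwise fun u v => η < dist u v) : #P ≤ #U := by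
  have hmem : ∀ p ∈ P, ∃ A ∈ U, p ∈ A := fun p hp => by simpa using hU.1 (hPE hp)
  choose! A hAU hpA using hmem
  refine Finset.card_le_card_of_injOn A hAU fun p hp q hq hpq => ?_
  by_contra hne
  exact (hP hp hq hne).not_ge ((hU.2 _ (hAU p hp)).2 p (hpA p hp) q (hpq ▸ hpA q hq))

theorem isTheta_dist_comp {α : Type*} {f : X → X} {C : ℝ} {E : Set X} (hC : 0 < C)
    (hf : ∀ x ∈ E, ∀ y ∈ E,
      C⁻¹ * dist x y ≤ dist (f x) (f y) ∧ dist (f x) (f y) ≤ C * dist x y)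
    {u : α → X} (hu : ∀ a, u a ∈ E) :
    (fun p : α × α => dist (f (u p.1)) (f (u p.2))) =Θ[⊤] fun p => dist (u p.1) (u p.2) := by
  refine ⟨isBigO_top.2 ⟨C, fun p => ?_⟩, isBigO_top.2 ⟨C, fun p => ?_⟩⟩ <;>
    simp only [Real.norm_of_nonneg dist_nonneg]
  · exact (hf _ (hu p.1) _ (hu p.2)).2
  · exact (inv_mul_le_iff₀ hC).1 (hf _ (hu p.1) _ (hu p.2)).1

theorem lipschitzEquivalent_of_isTheta {α β : Type*} [Nonempty α] {π : α → X} {π' : β → X}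
    {k : α → β} {E F : Set X} (hπ : BijOn π univ E) (hπ' : BijOn π' univ F)
    (hk : Function.Bijective k)
    (h : (fun p : α × α => dist (π' (k p.1)) (π' (k p.2))) =Θ[⊤]
      fun p => dist (π p.1) (π p.2)) :
    LipschitzEquivalent E F := by
  have hinv := hπ.invOn_invFunOn
  obtain ⟨C₁, h₁⟩ := isBigO_top.1 h.1
  obtain ⟨C₂, h₂⟩ := isBigO_top.1 h.2
  have hC : 0 < max (max C₁ C₂) 1 := lt_max_of_lt_right one_pos
  refine ⟨π' ∘ k ∘ Function.invFunOn π univ, max (max C₁ C₂) 1, hC,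
    hπ'.comp ((bijOn_univ.2 hk).comp (hπ.symm hinv.symm)), fun x hx y hy => ?_⟩
  obtain ⟨a, -, rfl⟩ := hπ.surjOn hx
  obtain ⟨b, -, rfl⟩ := hπ.surjOn hy
  have h₁ := h₁ (a, b)
  have h₂ := h₂ (a, b)
  simp only [Real.norm_of_nonneg dist_nonneg] at h₁ h₂
  simp only [Function.comp_apply, hinv.1 (mem_univ a), hinv.1 (mem_univ b)]
  constructor
  · rw [inv_mul_le_iff₀ hC]
    exact h₂.trans (by gcongr; exact (le_max_right _ _).trans (le_max_left _ _))
  · exact h₁.trans (by gcongr; exact (le_max_left _ _).trans (le_max_left _ _))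

structure IsDustSystem (ρ : Fin m → ℝ) (φ : Fin m → X → X) (E : Set X) : Prop where
  ratio_pos : ∀ j, 0 < ρ j
  ratio_lt_one : ∀ j, ρ j < 1
  isSimilarity : ∀ j, IsSimilarity (ρ j) (φ j)
  nonempty : E.Nonempty
  isCompact : IsCompact E
  eq_iUnion : E = ⋃ j, φ j '' E
  pairwise_disjoint : Pairwise fun j k => Disjoint (φ j '' E) (φ k '' E)

lemma IsDustLike.exists_isDustSystem {ρ : Fin m → ℝ} {E : Set X} (hE : IsDustLike ρ E)
    (hρ : ∀ j, ρ j ∈ Ioo 0 1) : ∃ φ, IsDustSystem ρ φ E :=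
  let ⟨hne, hc, φ, hsim, hdec, hdis⟩ := hE
  ⟨φ, fun j => (hρ j).1, fun j => (hρ j).2, hsim, hne, hc, hdec, hdis⟩

namespace IsDustSystem

variable {ρ : Fin m → ℝ} {φ : Fin m → X → X} {E : Set X}

lemma image_subset (h : IsDustSystem ρ φ E) (j : Fin m) : φ j '' E ⊆ E :=
  (subset_iUnion (fun j => φ j '' E) j).trans h.eq_iUnion.symm.subset

lemma exists_lt_one_forall_ratio_le (h : IsDustSystem ρ φ E) :
    ∃ c, 0 ≤ c ∧ c < 1 ∧ ∀ j, ρ j ≤ c := by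
  have hev : ∀ᶠ c in 𝓝[<] (1 : ℝ), ∀ j, ρ j ≤ c := eventually_all.2 fun j =>
    mem_of_superset (Ioo_mem_nhdsLT (h.ratio_lt_one j)) fun c hc => hc.1.le
  obtain ⟨c, hc, hc01⟩ := (hev.and (Ioo_mem_nhdsLT zero_lt_one)).exists
  exact ⟨c, hc01.1.le, hc01.2, hc⟩

lemma exists_pos_forall_le_ratio (h : IsDustSystem ρ φ E) : ∃ c, 0 < c ∧ ∀ j, c ≤ ρ j := by
  have hev : ∀ᶠ c in 𝓝[>] (0 : ℝ), ∀ j, c ≤ ρ j :=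
    eventually_all.2 fun j => mem_of_superset (Ioo_mem_nhdsGT (h.ratio_pos j)) fun c hc => hc.2.le
  obtain ⟨c, hc, hc0⟩ := (hev.and self_mem_nhdsWithin).exists
  exact ⟨c, hc0, hc⟩

lemma exists_pos_forall_le_dist (h : IsDustSystem ρ φ E) :
    ∃ δ, 0 < δ ∧ ∀ i j, i ≠ j → ∀ u ∈ E, ∀ v ∈ E, δ ≤ dist (φ i u) (φ j v) := by
  have hev : ∀ p : Fin m × Fin m, ∀ᶠ δ in 𝓝[>] (0 : ℝ),
      p.1 ≠ p.2 → ∀ u ∈ E, ∀ v ∈ E, δ ≤ dist (φ p.1 u) (φ p.2 v) := by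
    rintro ⟨i, j⟩
    by_cases hij : i = j
    · exact Eventually.of_forall fun _ hne => absurd hij hne
    have hcpt : ∀ k, IsCompact (φ k '' E) :=
      fun k => h.isCompact.image (h.isSimilarity k).lipschitzWith.continuous
    obtain ⟨r, hr, hlt⟩ := exists_pos_forall_lt_edist (hcpt i) (hcpt j).isClosed
      (h.pairwise_disjoint hij)
    filter_upwards [Ioo_mem_nhdsGT hr] with δ hδ _ u hu v hv
    have := hlt _ (mem_image_of_mem _ hu) _ (mem_image_of_mem _ hv)
    rw [edist_dist, ← ENNReal.ofReal_coe_nnreal] at this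
    exact hδ.2.le.trans ((ENNReal.ofReal_lt_ofReal_iff_of_nonneg r.2).1 this).le
  obtain ⟨δ, hδ, hδ0⟩ := ((eventually_all.2 hev).and self_mem_nhdsWithin).exists
  exact ⟨δ, hδ0, fun i j => hδ (i, j)⟩

open Classical in
lemma isDiamCover_biUnion (h : IsDustSystem ρ φ E) {η : ℝ} {V : Fin m → Finset (Set X)}
    (hV : ∀ j, IsDiamCover (η / ρ j) E (V j)) :
    IsDiamCover η E (Finset.univ.biUnion fun j => (V j).image (φ j '' ·)) := by
  refine ⟨fun e he => ?_, ?_⟩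
  · obtain ⟨j, x, hx, rfl⟩ : ∃ j, ∃ x ∈ E, φ j x = e := by simpa using h.eq_iUnion.subset he
    obtain ⟨A, hA, hxA⟩ := mem_sUnion.1 ((hV j).1 hx)
    exact mem_sUnion.2 ⟨φ j '' A, by simpa using ⟨j, A, hA, rfl⟩, mem_image_of_mem _ hxA⟩
  · simp only [Finset.mem_biUnion, Finset.mem_univ, Finset.mem_image, true_and]
    rintro _ ⟨j, A, hA, rfl⟩
    refine ⟨(image_mono ((hV j).2 A hA).1).trans (h.image_subset j), ?_⟩
    rintro _ ⟨x, hx, rfl⟩ _ ⟨y, hy, rfl⟩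
    rw [h.isSimilarity j x y, ← le_div_iff₀' (h.ratio_pos j)]
    exact ((hV j).2 A hA).2 x hx y hy

open Classical in
lemma pairwise_lt_dist_biUnion (h : IsDustSystem ρ φ E) {δ η : ℝ}
    (hδ : ∀ i j, i ≠ j → ∀ u ∈ E, ∀ v ∈ E, δ ≤ dist (φ i u) (φ j v)) (hη : η < δ)
    {P : Fin m → Finset X} (hPE : ∀ j, ↑(P j) ⊆ E)
    (hP : ∀ j, (P j : Set X).Pairwise fun u v => η / ρ j < dist u v) :
    (↑(Finset.univ.biUnion fun j => (P j).image (φ j)) : Set X).Pairwise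
      fun u v => η < dist u v := by
  simp only [Finset.coe_biUnion, Finset.coe_image, Finset.coe_univ, mem_univ, iUnion_true]
  rintro _ ⟨_, ⟨i, rfl⟩, a, ha, rfl⟩ _ ⟨_, ⟨j, rfl⟩, b, hb, rfl⟩ hne
  by_cases hij : i = j
  · subst hij
    rw [h.isSimilarity i a b, ← div_lt_iff₀' (h.ratio_pos i)]
    exact hP i ha hb fun hab => hne (hab ▸ rfl)
  · exact hη.trans_le (hδ i j hij a (hPE i ha) b (hPE j hb))

open Classical in
lemma card_biUnion_image (h : IsDustSystem ρ φ E) {P : Fin m → Finset X}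
    (hPE : ∀ j, ↑(P j) ⊆ E) :
    #(Finset.univ.biUnion fun j => (P j).image (φ j)) = ∑ j, #(P j) := by
  rw [Finset.card_biUnion fun i _ j _ hij => ?_]
  · simp only [Finset.card_image_of_injective _ ((h.isSimilarity _).injective (h.ratio_pos _))]
  simp only [Function.onFun, ← Finset.disjoint_coe, Finset.coe_image]
  exact (h.pairwise_disjoint hij).mono (image_mono (hPE i)) (image_mono (hPE j))

theorem exists_separated_finset (h : IsDustSystem ρ φ E) {t : ℝ} (ht : 0 ≤ t)
    (hρt : 1 ≤ ∑ j, ρ j ^ t) :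
    ∃ δ, 0 < δ ∧ ∀ ε, 0 < ε → ∃ P : Finset X, ↑P ⊆ E ∧
      (P : Set X).Pairwise (fun u v => δ * ε < dist u v) ∧ 1 ≤ #P * ε ^ t := by
  classical
  obtain ⟨δ, hδ, hsep⟩ := h.exists_pos_forall_le_dist
  obtain ⟨c, hc0, hc1, hρc⟩ := h.exists_lt_one_forall_ratio_le
  refine ⟨δ, hδ, fun ε hε => ?_⟩
  have large : ∀ ε : ℝ, 1 ≤ ε → ∃ P : Finset X, ↑P ⊆ E ∧
      (P : Set X).Pairwise (fun u v => δ * ε < dist u v) ∧ 1 ≤ #P * ε ^ t := fun ε hε => by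
    obtain ⟨e, he⟩ := h.nonempty
    exact ⟨{e}, by simpa, by simp, by simpa using Real.one_le_rpow hε ht⟩
  obtain ⟨N, hN⟩ := exists_pow_lt_of_lt_one hε hc1
  -- `N` bounds the number of rescalings `ε ↦ ε / ρ j` needed to reach a scale `≥ 1`.
  induction N generalizing ε with
  | zero => exact large ε (by simpa using hN.le)
  | succ N ih =>
    rcases le_or_gt 1 ε with hε1 | hε1
    · exact large ε hε1
    choose P hPE hPsep hPcard using fun j =>
      ih (ε / ρ j) (div_pos hε (h.ratio_pos j))
        (pow_lt_div_of_pow_succ_lt hc0 (h.ratio_pos j) (hρc j) hN)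
    refine ⟨Finset.univ.biUnion fun j => (P j).image (φ j), ?_, ?_, ?_⟩
    · simp only [Finset.coe_biUnion, Finset.coe_image, Finset.coe_univ, mem_univ, iUnion_true,
        iUnion_subset_iff]
      exact fun j => (image_mono (hPE j)).trans (h.image_subset j)
    · refine h.pairwise_lt_dist_biUnion hsep (mul_lt_of_lt_one_right hδ hε1) hPE fun j => ?_
      simpa only [mul_div_assoc] using hPsep j
    · rw [h.card_biUnion_image hPE, Nat.cast_sum, Finset.sum_mul]
      refine hρt.trans (Finset.sum_le_sum fun j _ => ?_)
      have := mul_le_mul_of_nonneg_right (hPcard j) (Real.rpow_nonneg (h.ratio_pos j).le t)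
      rwa [one_mul, Real.div_rpow hε.le (h.ratio_pos j).le, mul_assoc,
        div_mul_cancel₀ _ (Real.rpow_pos_of_pos (h.ratio_pos j) t).ne'] at this

theorem exists_isDiamCover (h : IsDustSystem ρ φ E) {s : ℝ} (hs : 0 ≤ s)
    (hρs : ∑ j, ρ j ^ s ≤ 1) :
    ∃ a, 0 < a ∧ ∀ ε, 0 < ε → a * ε ≤ 1 →
      ∃ U : Finset (Set X), IsDiamCover (ε * diam E) E U ∧ #U * (a * ε) ^ s ≤ 1 := by
  classical
  obtain ⟨a, ha, haρ⟩ := h.exists_pos_forall_le_ratio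
  obtain ⟨c, hc0, hc1, hρc⟩ := h.exists_lt_one_forall_ratio_le
  refine ⟨a, ha, fun ε hε haε => ?_⟩
  have large : ∀ ε : ℝ, 1 ≤ ε → a * ε ≤ 1 → ∃ U : Finset (Set X),
      IsDiamCover (ε * diam E) E U ∧ #U * (a * ε) ^ s ≤ 1 := fun ε hε haε => by
    refine ⟨{E}, ⟨by simp, ?_⟩, by simpa using Real.rpow_le_one (by positivity) haε hs⟩
    simp only [Finset.mem_singleton, forall_eq, subset_refl, true_and]
    exact fun u hu v hv => (dist_le_diam_of_mem h.isCompact.isBounded hu hv).trans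
      (le_mul_of_one_le_left diam_nonneg hε)
  obtain ⟨N, hN⟩ := exists_pow_lt_of_lt_one hε hc1
  induction N generalizing ε with
  | zero => exact large ε (by simpa using hN.le) haε
  | succ N ih =>
    rcases le_or_gt 1 ε with hε1 | hε1
    · exact large ε hε1 haε
    have haεj : ∀ j, a * (ε / ρ j) ≤ 1 := fun j => by
      rw [mul_div_assoc', div_le_one (h.ratio_pos j)]
      nlinarith [haρ j]
    choose V hV hVcard using fun j => ih (ε / ρ j) (div_pos hε (h.ratio_pos j)) (haεj j)
      (pow_lt_div_of_pow_succ_lt hc0 (h.ratio_pos j) (hρc j) hN)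
    refine ⟨Finset.univ.biUnion fun j => (V j).image (φ j '' ·),
      h.isDiamCover_biUnion fun j => by simpa only [div_mul_eq_mul_div] using hV j, ?_⟩
    calc (#(Finset.univ.biUnion fun j => (V j).image (φ j '' ·)) : ℝ) * (a * ε) ^ s
        ≤ (∑ j, (#(V j) : ℝ)) * (a * ε) ^ s := by
          gcongr
          exact_mod_cast Finset.card_biUnion_le.trans
            (Finset.sum_le_sum fun j _ => Finset.card_image_le)
      _ = ∑ j, #(V j) * (a * (ε / ρ j)) ^ s * ρ j ^ s := by
          rw [Finset.sum_mul]
          refine Finset.sum_congr rfl fun j _ => ?_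
          rw [mul_assoc, ← Real.mul_rpow (by have := h.ratio_pos j; positivity)
            (h.ratio_pos j).le, mul_assoc, div_mul_cancel₀ _ (h.ratio_pos j).ne']
      _ ≤ ∑ j, ρ j ^ s := Finset.sum_le_sum fun j _ =>
          mul_le_of_le_one_left (Real.rpow_nonneg (h.ratio_pos j).le s) (hVcard j)
      _ ≤ 1 := hρs

theorem sum_rpow_le_one_of_lipschitzOnWith {n : ℕ} {τ : Fin n → ℝ} {ψ : Fin n → X → X}
    {F : Set X} (hE : IsDustSystem ρ φ E) (hF : IsDustSystem τ ψ F) {f : X → X} {K : ℝ≥0}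
    (hf : LipschitzOnWith K f E) (hfEF : SurjOn f E F) {s : ℝ} (hs : 0 ≤ s)
    (hρs : ∑ j, ρ j ^ s ≤ 1) : ∑ j, τ j ^ s ≤ 1 := by
  by_contra! hτs
  obtain ⟨t, hτt, hst⟩ := exists_lt_sum_rpow hF.ratio_pos hτs
  obtain ⟨δ, hδ, hpack⟩ := hF.exists_separated_finset (hs.trans hst.le) hτt.le
  obtain ⟨a, ha, hcover⟩ := hE.exists_isDiamCover hs hρs
  set κ := δ / (K * diam E + 1)
  have hκ : 0 < κ := by positivity
  have hKκ : K * (κ * diam E) ≤ δ := by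
    rw [← mul_assoc, mul_comm _ κ, mul_assoc, div_mul_eq_mul_div, div_le_iff₀ (by positivity)]
    nlinarith [mul_nonneg K.2 (diam_nonneg (s := E))]
  refine (Real.rpow_pos_of_pos (mul_pos ha hκ) s).not_ge (nonpos_of_forall_le_rpow
    (sub_pos.2 hst) (inv_pos.2 (mul_pos ha hκ)) fun ε hε hεa => ?_)
  obtain ⟨P, hPF, hPsep, hPcard⟩ := hpack ε hε
  have haκε : a * (κ * ε) ≤ 1 := by
    have := mul_le_mul_of_nonneg_left hεa (mul_pos ha hκ).le
    rwa [mul_inv_cancel₀ (mul_pos ha hκ).ne', mul_assoc] at this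
  obtain ⟨U, hU, hUcard⟩ := hcover (κ * ε) (by positivity) haκε
  have hPU : #P ≤ #U := by
    refine (((hU.image hf).mono ?_).card_le_of_pairwise_lt_dist (hPF.trans hfEF) hPsep).trans
      Finset.card_image_le
    calc K * (κ * ε * diam E) = K * (κ * diam E) * ε := by ring
      _ ≤ δ * ε := by gcongr
  exact rpow_le_rpow_sub_of_card_bounds (M := #U) (by positivity) hε hPcard (by exact_mod_cast hPU)
    (by rwa [← mul_assoc] at hUcard)

lemma prefixMap_image_subset (h : IsDustSystem ρ φ E) (x : ℕ → Fin m) (k : ℕ) :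
    prefixMap φ x k '' E ⊆ E := by
  induction k with
  | zero => simp [prefixMap]
  | succ k ih =>
    rw [prefixMap, image_comp]
    exact (image_mono (h.image_subset _)).trans ih

lemma prefixMap_succ_image_subset (h : IsDustSystem ρ φ E) (x : ℕ → Fin m) (k : ℕ) :
    prefixMap φ x (k + 1) '' E ⊆ prefixMap φ x k '' E := by
  rw [prefixMap, image_comp]
  exact image_mono (h.image_subset _)

lemma dist_le_of_mem_prefixMap_image (h : IsDustSystem ρ φ E) {x : ℕ → Fin m} {k : ℕ} {u v : X}
    (hu : u ∈ prefixMap φ x k '' E) (hv : v ∈ prefixMap φ x k '' E) :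
    dist u v ≤ (∏ i ∈ Finset.range k, ρ (x i)) * diam E := by
  obtain ⟨a, ha, rfl⟩ := hu
  obtain ⟨b, hb, rfl⟩ := hv
  rw [isSimilarity_prefixMap h.isSimilarity x k a b]
  exact mul_le_mul_of_nonneg_left (dist_le_diam_of_mem h.isCompact.isBounded ha hb)
    (Finset.prod_nonneg fun i _ => (h.ratio_pos _).le)

lemma eq_of_forall_mem_prefixMap_image (h : IsDustSystem ρ φ E) {x : ℕ → Fin m} {u v : X}
    (hu : ∀ k, u ∈ prefixMap φ x k '' E) (hv : ∀ k, v ∈ prefixMap φ x k '' E) : u = v := by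
  obtain ⟨c, hc0, hc1, hρc⟩ := h.exists_lt_one_forall_ratio_le
  have hlim : Tendsto (fun k : ℕ => c ^ k * diam E) atTop (𝓝 0) := by
    simpa using (tendsto_pow_atTop_nhds_zero_of_lt_one hc0 hc1).mul_const (diam E)
  refine dist_le_zero.1 (ge_of_tendsto' hlim fun k => ?_)
  refine (h.dist_le_of_mem_prefixMap_image (hu k) (hv k)).trans
    (mul_le_mul_of_nonneg_right ?_ diam_nonneg)
  simpa using Finset.prod_le_prod (s := Finset.range k) (fun i _ => (h.ratio_pos (x i)).le)
    fun i _ => hρc (x i)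

lemma isCompact_prefixMap_image (h : IsDustSystem ρ φ E) (x : ℕ → Fin m) (k : ℕ) :
    IsCompact (prefixMap φ x k '' E) :=
  h.isCompact.image (isSimilarity_prefixMap h.isSimilarity x k).lipschitzWith.continuous

lemma nonempty_iInter_prefixMap_image (h : IsDustSystem ρ φ E) (x : ℕ → Fin m) :
    (⋂ k, prefixMap φ x k '' E).Nonempty :=
  IsCompact.nonempty_iInter_of_sequence_nonempty_isCompact_isClosed _
    (h.prefixMap_succ_image_subset x) (fun _ => h.nonempty.image _)
    (h.isCompact_prefixMap_image x 0) fun k => (h.isCompact_prefixMap_image x k).isClosed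

def coding (h : IsDustSystem ρ φ E) (x : ℕ → Fin m) : X :=
  (h.nonempty_iInter_prefixMap_image x).some

lemma coding_mem_prefixMap_image (h : IsDustSystem ρ φ E) (x : ℕ → Fin m) (k : ℕ) :
    h.coding x ∈ prefixMap φ x k '' E :=
  mem_iInter.1 (h.nonempty_iInter_prefixMap_image x).some_mem k

lemma exists_forall_mem_prefixMap_image (h : IsDustSystem ρ φ E) {e : X} (he : e ∈ E) :
    ∃ x, ∀ k, e ∈ prefixMap φ x k '' E := by
  have hsplit : ∀ e : E, ∃ j, ∃ e' : E, φ j e' = e := fun e => by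
    obtain ⟨j, e', he', hj⟩ : ∃ j, ∃ e' ∈ E, φ j e' = e := by simpa using h.eq_iUnion.subset e.2
    exact ⟨j, ⟨e', he'⟩, hj⟩
  choose J T hT using hsplit
  suffices ∀ k (e : E), (e : X) ∈ prefixMap φ (fun i => J (T^[i] e)) k '' E from
    ⟨_, fun k => this k ⟨e, he⟩⟩
  intro k
  induction k with
  | zero => exact fun e => ⟨e, e.2, rfl⟩
  | succ k ih =>
    intro e
    obtain ⟨a, ha, hae⟩ := ih (T e)
    refine ⟨a, ha, ?_⟩
    rw [prefixMap_succ']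
    change φ (J e) (prefixMap φ (fun i => J (T^[i] (T e))) k a) = e
    rw [hae, hT]

lemma dist_coding_le (h : IsDustSystem ρ φ E) (x y : ℕ → Fin m) :
    dist (h.coding x) (h.coding y) ≤
      (∏ i ∈ Finset.range (PiNat.firstDiff x y), ρ (x i)) * diam E := by
  have hxy : ∀ i < PiNat.firstDiff x y, x i = y i := fun i hi =>
    PiNat.apply_eq_of_lt_firstDiff (x := x) (y := y) hi
  exact h.dist_le_of_mem_prefixMap_image (h.coding_mem_prefixMap_image x _)
    (prefixMap_congr φ hxy ▸ h.coding_mem_prefixMap_image y _)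

lemma le_dist_coding (h : IsDustSystem ρ φ E) {δ : ℝ}
    (hδ : ∀ i j, i ≠ j → ∀ u ∈ E, ∀ v ∈ E, δ ≤ dist (φ i u) (φ j v)) {x y : ℕ → Fin m}
    (hne : x ≠ y) :
    δ * ∏ i ∈ Finset.range (PiNat.firstDiff x y), ρ (x i) ≤ dist (h.coding x) (h.coding y) := by
  set k := PiNat.firstDiff x y
  have hxy : ∀ i < k, x i = y i := fun i hi => PiNat.apply_eq_of_lt_firstDiff (x := x) (y := y) hi
  obtain ⟨a, ha, hxa⟩ := h.coding_mem_prefixMap_image x (k + 1)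
  obtain ⟨b, hb, hyb⟩ := h.coding_mem_prefixMap_image y (k + 1)
  rw [← hxa, ← hyb, prefixMap, prefixMap, ← prefixMap_congr φ hxy, Function.comp_apply,
    Function.comp_apply, isSimilarity_prefixMap h.isSimilarity x k, mul_comm]
  exact mul_le_mul_of_nonneg_left (hδ _ _ (PiNat.apply_firstDiff_ne hne) a ha b hb)
    (Finset.prod_nonneg fun i _ => (h.ratio_pos _).le)

lemma bijOn_coding (h : IsDustSystem ρ φ E) : BijOn h.coding univ E := by
  refine ⟨fun x _ => ?_, fun x _ y _ hxy => ?_, fun e he => ?_⟩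
  · simpa [prefixMap] using h.coding_mem_prefixMap_image x 0
  · by_contra hne
    obtain ⟨δ, hδ, hsep⟩ := h.exists_pos_forall_le_dist
    have := h.le_dist_coding hsep hne
    rw [hxy, dist_self] at this
    exact this.not_gt (mul_pos hδ (Finset.prod_pos fun i _ => h.ratio_pos _))
  · obtain ⟨x, hx⟩ := h.exists_forall_mem_prefixMap_image he
    exact ⟨x, mem_univ x, h.eq_of_forall_mem_prefixMap_image (h.coding_mem_prefixMap_image x) hx⟩

lemma nonempty_code (h : IsDustSystem ρ φ E) : Nonempty (ℕ → Fin m) :=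
  let ⟨x, _⟩ := h.bijOn_coding.surjOn h.nonempty.some_mem
  ⟨x⟩

theorem isTheta_dist_coding (h : IsDustSystem ρ φ E) :
    (fun p : (ℕ → Fin m) × (ℕ → Fin m) => dist (h.coding p.1) (h.coding p.2)) =Θ[⊤]
      fun p => commonWeight ρ p.1 p.2 := by
  obtain ⟨δ, hδ, hsep⟩ := h.exists_pos_forall_le_dist
  refine ⟨isBigO_top.2 ⟨diam E, fun ⟨x, y⟩ => ?_⟩, isBigO_top.2 ⟨δ⁻¹, fun ⟨x, y⟩ => ?_⟩⟩ <;>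
    rw [Real.norm_of_nonneg dist_nonneg,
      Real.norm_of_nonneg (commonWeight_nonneg (fun j => (h.ratio_pos j).le) x y)] <;>
    by_cases hxy : x = y
  · simp [hxy, commonWeight]
  · rw [commonWeight, if_neg hxy, mul_comm]
    exact h.dist_coding_le x y
  · simp [hxy, commonWeight]
  · rw [commonWeight, if_neg hxy, inv_mul_eq_div, le_div_iff₀' hδ]
    exact h.le_dist_coding hsep hxy

theorem isTheta_dist_coding_rpow {φ' : Fin m → X → X} {E' : Set X} {r : ℝ} (hr : 0 < r)
    (h : IsDustSystem ρ φ E) (h' : IsDustSystem (fun j => ρ j ^ r) φ' E') :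
    (fun p : (ℕ → Fin m) × (ℕ → Fin m) => dist (h'.coding p.1) (h'.coding p.2)) =Θ[⊤]
      fun p => dist (h.coding p.1) (h.coding p.2) ^ r := by
  have hρ : ∀ j, 0 ≤ ρ j := fun j => (h.ratio_pos j).le
  refine h'.isTheta_dist_coding.trans ?_
  simp only [commonWeight_rpow hρ hr.ne']
  exact (h.isTheta_dist_coding.rpow (Eventually.of_forall fun _ => dist_nonneg)
    (Eventually.of_forall fun _ => commonWeight_nonneg hρ _ _)).symm

theorem lipschitzEquivalent_rpow {n : ℕ} {τ : Fin n → ℝ} {ψ : Fin n → X → X} {F : Set X}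
    {φ' : Fin m → X → X} {ψ' : Fin n → X → X} {E' F' : Set X} {r : ℝ} (hr : 0 < r)
    (hE : IsDustSystem ρ φ E) (hF : IsDustSystem τ ψ F)
    (hE' : IsDustSystem (fun j => ρ j ^ r) φ' E') (hF' : IsDustSystem (fun j => τ j ^ r) ψ' F')
    (hEF : LipschitzEquivalent E F) : LipschitzEquivalent E' F' := by
  obtain ⟨f, C, hC, hfEF, hf⟩ := hEF
  have := hE.nonempty_code
  have := hF.nonempty_code
  have hcodingE : ∀ x, hE.coding x ∈ E := fun x => hE.bijOn_coding.mapsTo (mem_univ x)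
  obtain ⟨k, hk, hkbij⟩ : ∃ k : (ℕ → Fin m) → ℕ → Fin n,
      (∀ x, hF.coding (k x) = f (hE.coding x)) ∧ Function.Bijective k :=
    ⟨_, fun x => hF.bijOn_coding.invOn_invFunOn.2 (hfEF.mapsTo (hcodingE x)), bijOn_univ.1 <|
      (hF.bijOn_coding.symm hF.bijOn_coding.invOn_invFunOn.symm).comp
        (hfEF.comp hE.bijOn_coding)⟩
  refine lipschitzEquivalent_of_isTheta hE'.bijOn_coding hF'.bijOn_coding hkbij ?_
  have hF'F := hF.isTheta_dist_coding_rpow hr hF'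
  calc (fun p : (ℕ → Fin m) × (ℕ → Fin m) => dist (hF'.coding (k p.1)) (hF'.coding (k p.2)))
      =Θ[⊤] fun p => dist (hF.coding (k p.1)) (hF.coding (k p.2)) ^ r :=
        ⟨hF'F.1.comp_tendsto (tendsto_top (f := Prod.map k k)),
          hF'F.2.comp_tendsto (tendsto_top (f := Prod.map k k))⟩
    _ = fun p => dist (f (hE.coding p.1)) (f (hE.coding p.2)) ^ r := by simp only [hk]
    _ =Θ[⊤] fun p => dist (hE.coding p.1) (hE.coding p.2) ^ r :=
        (isTheta_dist_comp hC hf hcodingE).rpow (Eventually.of_forall fun _ => dist_nonneg)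
          (Eventually.of_forall fun _ => dist_nonneg)
    _ =Θ[⊤] fun p => dist (hE'.coding p.1) (hE'.coding p.2) :=
        (hE.isTheta_dist_coding_rpow hr hE').symm

end IsDustSystem

theorem isContractionVector_rpow {d m : ℕ} {ρ : Fin m → ℝ} (hρ : ∀ j, ρ j ∈ Ioo 0 1)
    (hd : 1 ≤ d) {s r : ℝ} (hs : 0 ≤ s) (hsr : s < r) (hρs : ∑ j, ρ j ^ s ≤ 1) :
    IsContractionVector d m fun j => ρ j ^ r := by
  have hr : 0 < r := hs.trans_lt hsr
  have hρr : ∀ j, ρ j ^ r ∈ Ioo 0 1 := fun j =>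
    ⟨Real.rpow_pos_of_pos (hρ j).1 r, Real.rpow_lt_one (hρ j).1.le (hρ j).2 hr⟩
  refine ⟨hρr, ?_⟩
  rcases isEmpty_or_nonempty (Fin m) with hm | hm
  · simp
  calc ∑ j, (ρ j ^ r) ^ d ≤ ∑ j, ρ j ^ r :=
        Finset.sum_le_sum fun j _ => pow_le_of_le_one (hρr j).1.le (hρr j).2.le (by omega)
    _ < ∑ j, ρ j ^ s := Finset.sum_lt_sum_of_nonempty Finset.univ_nonempty fun j _ =>
        Real.rpow_lt_rpow_of_exponent_gt (hρ j).1 (hρ j).2 hsr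
    _ ≤ 1 := hρs

theorem lipschitz_equivalent_rpow
    (d m n : ℕ) (hd : 1 ≤ d)
    (ρ : Fin m → ℝ) (τ : Fin n → ℝ)
    (hρ : IsContractionVector d m ρ) (hτ : IsContractionVector d n τ)
    (E F : Set (EuclideanSpace ℝ (Fin d)))
    (hE : IsDustLike ρ E) (hF : IsDustLike τ F)
    (hEF : LipschitzEquivalent E F)
    (s : ℝ) (hs : 0 < s) (hdim : ∑ j, ρ j ^ s = 1) :
    ∀ r : ℝ, s < r →
      IsContractionVector d m (fun j => ρ j ^ r) ∧
      IsContractionVector d n (fun j => τ j ^ r) ∧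
      ∀ E' F' : Set (EuclideanSpace ℝ (Fin d)),
        IsDustLike (fun j => ρ j ^ r) E' → IsDustLike (fun j => τ j ^ r) F' →
        LipschitzEquivalent E' F' := by
  intro r hsr
  obtain ⟨φ, hφ⟩ := hE.exists_isDustSystem hρ.1
  obtain ⟨ψ, hψ⟩ := hF.exists_isDustSystem hτ.1
  have hτs : ∑ j, τ j ^ s ≤ 1 := by
    obtain ⟨f, C, -, hfEF, hf⟩ := hEF
    exact hφ.sum_rpow_le_one_of_lipschitzOnWith hψ
      (LipschitzOnWith.of_dist_le' fun x hx y hy => (hf x hx y hy).2) hfEF.surjOn hs.le hdim.le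
  have hρr := isContractionVector_rpow hρ.1 hd hs.le hsr hdim.le
  have hτr := isContractionVector_rpow hτ.1 hd hs.le hsr hτs
  refine ⟨hρr, hτr, fun E' F' hE' hF' => ?_⟩
  obtain ⟨φ', hφ'⟩ := hE'.exists_isDustSystem hρr.1
  obtain ⟨ψ', hψ'⟩ := hF'.exists_isDustSystem hτr.1
  exact hφ.lipschitzEquivalent_rpow (hs.trans hsr) hψ hφ' hψ' hEF
end
end

section
/- Let ρ and τ be contraction vectors for ℝ^d that are equivalent, i.e. joined by a finite chain ρ = ρ⁽¹⁾, ρ⁽²⁾, …, ρ⁽ᴺ⁾ = τ of contraction vectors in which, for each 1 ≤ j < N, either ρ⁽ʲ⁺¹⁾ is derived from ρ⁽ʲ⁾ or ρ⁽ʲ⁾ is derived from ρ⁽ʲ⁺¹⁾. Then every E ∈ D(ρ) and every F ∈ D(τ) are Lipschitz equivalent. -/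
/-!
Both sets are compared with the sequence space `Σ_m` under the metric `ρ_{w ∧ w'}`. A point of a
dust-like `E ∈ D(ρ)` has a unique address in `Σ_m`, and two points with different addresses are the
images, under the similarity of their common prefix, of points in two different first-level pieces;
these pieces are compact and disjoint, hence uniformly separated, so the coding `Σ_m → E` is
bi-Lipschitz. The same argument applies to `Σ_m` itself when `τ` is derived from `ρ` by a cut set
`{j_r}`: prefixing `j_r` scales `ρ_{w ∧ w'}` by `τ_r`, and the cylinders `[j_r]` tile `Σ_m` and are
separated, so `(Σ_n, τ)` and `(Σ_m, ρ)` are bi-Lipschitz equivalent. This relation is an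
equivalence, so it propagates along the chain.
-/

open Set Metric MeasureTheory

noncomputable section

/-- The symbol cylinder `[i] ⊆ Σ_m` of all infinite sequences beginning with
the finite word `i`. -/
def symbCyl {m : ℕ} (i : List (Fin m)) : Set (ℕ → Fin m) :=
  {w | ∀ t : Fin i.length, w t = i.get t}

/-- `b` is derived from `a`: there is a cut set `{j₁, …, j_n}` of `Σ_m`
(nonempty words whose symbol cylinders are pairwise disjoint and tile `Σ_m`)
such that `b = (a_{j₁}, …, a_{j_n})`. -/
def DerivedFrom (a b : Σ k : ℕ, Fin k → ℝ) : Prop :=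
  ∃ j : Fin b.1 → List (Fin a.1),
    (∀ r, j r ≠ []) ∧
    (Pairwise fun r r' => Disjoint (symbCyl (j r)) (symbCyl (j r'))) ∧
    (⋃ r, symbCyl (j r)) = Set.univ ∧
    ∀ r, b.2 r = ((j r).map a.2).prod

/-- Two contraction vectors for `ℝ^d` are equivalent if they are joined by a
finite chain of contraction vectors in which each consecutive pair is related
by derivation (in one direction or the other). -/
def CVEquiv (d : ℕ) (a b : Σ k : ℕ, Fin k → ℝ) : Prop :=
  Relation.ReflTransGen
    (fun u v => IsContractionVector d u.1 u.2 ∧ IsContractionVector d v.1 v.2 ∧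
      (DerivedFrom u v ∨ DerivedFrom v u)) a b

open Filter Function PiNat Topology

def BiLipschitzEquivalent {α β : Type*} (d₁ : α → α → ℝ) (d₂ : β → β → ℝ) : Prop :=
  ∃ (e : α ≃ β) (C : ℝ), 0 < C ∧
    ∀ x y, C⁻¹ * d₁ x y ≤ d₂ (e x) (e y) ∧ d₂ (e x) (e y) ≤ C * d₁ x y

namespace BiLipschitzEquivalent

variable {α β γ : Type*} {d₁ : α → α → ℝ} {d₂ : β → β → ℝ} {d₃ : γ → γ → ℝ}

protected theorem refl (d₁ : α → α → ℝ) : BiLipschitzEquivalent d₁ d₁ :=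
  ⟨Equiv.refl α, 1, one_pos, fun x y => by simp⟩

protected theorem symm (h : BiLipschitzEquivalent d₁ d₂) : BiLipschitzEquivalent d₂ d₁ := by
  obtain ⟨e, C, hC, he⟩ := h
  refine ⟨e.symm, C, hC, fun x y => ?_⟩
  obtain ⟨hlow, hup⟩ := he (e.symm x) (e.symm y)
  rw [e.apply_symm_apply, e.apply_symm_apply] at hlow hup
  exact ⟨(inv_mul_le_iff₀ hC).2 hup, (inv_mul_le_iff₀ hC).1 hlow⟩

protected theorem trans (h₁₂ : BiLipschitzEquivalent d₁ d₂) (h₂₃ : BiLipschitzEquivalent d₂ d₃) :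
    BiLipschitzEquivalent d₁ d₃ := by
  obtain ⟨e, C, hC, he⟩ := h₁₂
  obtain ⟨f, D, hD, hf⟩ := h₂₃
  refine ⟨e.trans f, C * D, mul_pos hC hD, fun x y => ⟨?_, ?_⟩⟩
  · calc (C * D)⁻¹ * d₁ x y = D⁻¹ * (C⁻¹ * d₁ x y) := by rw [mul_inv]; ring
      _ ≤ D⁻¹ * d₂ (e x) (e y) := by gcongr; exact (he x y).1
      _ ≤ d₃ (f (e x)) (f (e y)) := (hf (e x) (e y)).1
  · calc d₃ (f (e x)) (f (e y)) ≤ D * d₂ (e x) (e y) := (hf (e x) (e y)).2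
      _ ≤ D * (C * d₁ x y) := by gcongr; exact (he x y).2
      _ = C * D * d₁ x y := by ring

end BiLipschitzEquivalent

theorem lipschitzEquivalent_of_biLipschitzEquivalent {X : Type*} [MetricSpace X] {E F : Set X}
    (h : BiLipschitzEquivalent (dist : E → E → ℝ) (dist : F → F → ℝ)) :
    LipschitzEquivalent E F := by
  classical
  obtain ⟨e, C, hC, he⟩ := h
  refine ⟨fun x => if hx : x ∈ E then e ⟨x, hx⟩ else x, C, hC, ⟨?_, ?_, ?_⟩, ?_⟩
  · intro x hx
    simp [hx]
  · intro x hx y hy hxy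
    simpa [hx, hy, Subtype.val_inj] using hxy
  · intro y hy
    exact ⟨e.symm ⟨y, hy⟩, (e.symm ⟨y, hy⟩).2, by simp⟩
  · intro x hx y hy
    simpa [hx, hy, Subtype.dist_eq] using he ⟨x, hx⟩ ⟨y, hy⟩

section SymbolicDist

variable {α : Type*} {σ : α → ℝ}

open Classical in
/-- The paper's metric `ρ_{w ∧ w'}` on `Σ_m`: the ratio of the longest common prefix. -/
def symbolicDist (σ : α → ℝ) (w w' : ℕ → α) : ℝ :=
  if w = w' then 0 else ∏ t ∈ Finset.range (firstDiff w w'), σ (w t)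

@[simp]
theorem symbolicDist_self (σ : α → ℝ) (w : ℕ → α) : symbolicDist σ w w = 0 := by
  simp [symbolicDist]

theorem symbolicDist_of_ne {w w' : ℕ → α} (h : w ≠ w') :
    symbolicDist σ w w' = ∏ t ∈ Finset.range (firstDiff w w'), σ (w t) := by
  simp [symbolicDist, h]

theorem symbolicDist_pos (hσ : ∀ i, 0 < σ i) {w w' : ℕ → α} (h : w ≠ w') :
    0 < symbolicDist σ w w' := by
  rw [symbolicDist_of_ne h]
  exact Finset.prod_pos fun t _ => hσ _

theorem symbolicDist_nonneg (hσ : ∀ i, 0 ≤ σ i) (w w' : ℕ → α) : 0 ≤ symbolicDist σ w w' := by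
  rcases eq_or_ne w w' with rfl | h
  · simp
  · rw [symbolicDist_of_ne h]
    exact Finset.prod_nonneg fun t _ => hσ _

theorem symbolicDist_eq_zero_iff (hσ : ∀ i, 0 < σ i) (w w' : ℕ → α) :
    symbolicDist σ w w' = 0 ↔ w = w' := by
  refine ⟨fun h => ?_, by rintro rfl; simp⟩
  by_contra hne
  exact (symbolicDist_pos hσ hne).ne' h

theorem symbolicDist_le_one (hσ₀ : ∀ i, 0 ≤ σ i) (hσ₁ : ∀ i, σ i ≤ 1) (w w' : ℕ → α) :
    symbolicDist σ w w' ≤ 1 := by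
  rcases eq_or_ne w w' with rfl | h
  · simp
  · rw [symbolicDist_of_ne h]
    exact Finset.prod_le_one (fun t _ => hσ₀ _) fun t _ => hσ₁ _

theorem firstDiff_cons_cons (c : α) {u u' : Stream' α} (h : u ≠ u') :
    firstDiff (Stream'.cons c u) (Stream'.cons c u') = firstDiff u u' + 1 := by
  have hne : Stream'.cons c u ≠ Stream'.cons c u' := fun h' => h (Stream'.cons_injective_right c h')
  refine le_antisymm ?_ ?_
  · by_contra! hlt
    exact apply_firstDiff_ne h (apply_eq_of_lt_firstDiff (n := firstDiff u u' + 1) hlt)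
  · refine (mem_cylinder_iff_le_firstDiff hne _).1 fun i hi => ?_
    rcases i with _ | i
    · rfl
    · exact apply_eq_of_lt_firstDiff (x := u) (y := u') (by omega)

theorem symbolicDist_cons_cons (c : α) (u u' : Stream' α) :
    symbolicDist σ (Stream'.cons c u) (Stream'.cons c u') = σ c * symbolicDist σ u u' := by
  rcases eq_or_ne u u' with rfl | h
  · rw [symbolicDist_self σ (Stream'.cons c u), symbolicDist_self σ u, mul_zero]
  · rw [symbolicDist_of_ne h, symbolicDist_of_ne (fun h' => h (Stream'.cons_injective_right c h')),
      firstDiff_cons_cons c h, Finset.prod_range_succ', mul_comm]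
    rfl

theorem symbolicDist_cons_cons_of_ne {c c' : α} (h : c ≠ c') (u u' : Stream' α) :
    symbolicDist σ (Stream'.cons c u) (Stream'.cons c' u') = 1 := by
  have hne : Stream'.cons c u ≠ Stream'.cons c' u' := fun h' => h (congrFun h' 0)
  have hzero : firstDiff (Stream'.cons c u) (Stream'.cons c' u') = 0 :=
    Nat.eq_zero_of_not_pos fun hpos => h (apply_eq_of_lt_firstDiff hpos)
  rw [symbolicDist_of_ne hne, hzero, Finset.prod_range_zero]

theorem symbolicDist_append (p : List α) (u u' : Stream' α) :
    symbolicDist σ (p ++ₛ u) (p ++ₛ u') = (p.map σ).prod * symbolicDist σ u u' := by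
  induction p with
  | nil => simp only [Stream'.nil_append_stream, List.map_nil, List.prod_nil, one_mul]
  | cons c p ih =>
    rw [Stream'.cons_append_stream, Stream'.cons_append_stream, symbolicDist_cons_cons, ih,
      List.map_cons, List.prod_cons, mul_assoc]

theorem prod_map_le_symbolicDist (hσ₀ : ∀ i, 0 ≤ σ i) (hσ₁ : ∀ i, σ i ≤ 1) (p : List α)
    (u : Stream' α) {u' : Stream' α} (hu' : ∀ v, p ++ₛ v ≠ u') :
    (p.map σ).prod ≤ symbolicDist σ (p ++ₛ u) u' := by
  induction p generalizing u' with
  | nil => exact absurd rfl (hu' u')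
  | cons c p ih =>
    rw [← Stream'.eta u', Stream'.cons_append_stream]
    rcases eq_or_ne (Stream'.head u') c with hc | hc
    · have htail : ∀ v, p ++ₛ v ≠ Stream'.tail u' := fun v hv =>
        hu' v (by rw [Stream'.cons_append_stream, hv, ← hc, Stream'.eta])
      rw [hc, symbolicDist_cons_cons, List.map_cons, List.prod_cons]
      exact mul_le_mul_of_nonneg_left (ih htail) (hσ₀ c)
    · rw [symbolicDist_cons_cons_of_ne (Ne.symm hc)]
      simpa using List.prod_map_le_prod_map₀ (s := c :: p) σ (fun _ => 1) (fun x _ => hσ₀ x)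
        fun x _ => hσ₁ x

end SymbolicDist

theorem mem_symbCyl_iff {m : ℕ} {p : List (Fin m)} {w : ℕ → Fin m} :
    w ∈ symbCyl p ↔ ∃ u, p ++ₛ u = w := by
  refine ⟨fun hw => ⟨Stream'.drop p.length w, ?_⟩, ?_⟩
  · conv_rhs => rw [← Stream'.append_take_drop p.length w]
    congr 1
    refine List.ext_getElem (Stream'.length_take _ _).symm fun n h₁ h₂ => ?_
    exact (hw ⟨n, h₁⟩).symm.trans (Stream'.take_get (h := h₂)).symm
  · rintro ⟨u, rfl⟩ t
    exact Stream'.get_append_left (a := u) (h := t.isLt)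

theorem continuous_append_stream {α : Type*} [TopologicalSpace α] (p : List α) :
    Continuous fun u : ℕ → α => (p ++ₛ u).get := by
  induction p with
  | nil => exact continuous_id
  | cons c p ih =>
    refine continuous_pi fun n => ?_
    rcases n with _ | n
    · exact continuous_const
    · exact (continuous_apply n).comp ih

section Addresses

variable {X ι : Type*} {φ : ι → X → X} {w w' : ℕ → ι}

def compPrefix (φ : ι → X → X) (w : ℕ → ι) : ℕ → X → X
  | 0 => id
  | k + 1 => compPrefix φ w k ∘ φ (w k)

theorem compPrefix_congr {k : ℕ} (h : ∀ t < k, w t = w' t) :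
    compPrefix φ w k = compPrefix φ w' k := by
  induction k with
  | zero => rfl
  | succ k ih =>
    simp only [compPrefix, h k (Nat.lt_succ_self k), ih fun t ht => h t (ht.trans k.lt_succ_self)]

theorem compPrefix_scale {d : X → X → ℝ} {σ : ι → ℝ}
    (hsim : ∀ i x y, d (φ i x) (φ i y) = σ i * d x y) (w : ℕ → ι) (k : ℕ) (x y : X) :
    d (compPrefix φ w k x) (compPrefix φ w k y) = (∏ t ∈ Finset.range k, σ (w t)) * d x y := by
  induction k generalizing x y with
  | zero => simp [compPrefix]
  | succ k ih =>
    simp only [compPrefix, Function.comp_apply, ih, hsim, Finset.prod_range_succ, mul_assoc]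

theorem continuous_compPrefix [TopologicalSpace X] (hφ : ∀ i, Continuous (φ i)) (w : ℕ → ι)
    (k : ℕ) : Continuous (compPrefix φ w k) := by
  induction k with
  | zero => exact continuous_id
  | succ k ih => exact ih.comp (hφ _)

def HasAddress (φ : ι → X → X) (x : X) (w : ℕ → ι) : Prop :=
  ∀ k, x ∈ range (compPrefix φ w k)

theorem exists_hasAddress_of_cover (hcover : ∀ x, ∃ i y, φ i y = x) (x : X) :
    ∃ w, HasAddress φ x w := by
  choose label pre hpre using hcover
  refine ⟨fun k => label (pre^[k] x), fun k => ⟨pre^[k] x, ?_⟩⟩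
  induction k with
  | zero => rfl
  | succ k ih =>
    rw [compPrefix, Function.comp_apply, Function.iterate_succ_apply', hpre, ih]

theorem exists_hasAddress_of_compactSpace [TopologicalSpace X] [CompactSpace X] [T2Space X]
    [Nonempty X] (hφ : ∀ i, Continuous (φ i)) (w : ℕ → ι) : ∃ x, HasAddress φ x w := by
  have hcompact k : IsCompact (range (compPrefix φ w k)) :=
    isCompact_range (continuous_compPrefix hφ w k)
  obtain ⟨x, hx⟩ := (hcompact 0).nonempty_iInter_of_sequence_nonempty_isCompact_isClosed _
    (fun k => range_comp_subset_range _ _) (fun k => range_nonempty _)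
    (fun k => (hcompact k).isClosed)
  exact ⟨x, mem_iInter.1 hx⟩

variable {d : X → X → ℝ} {σ : ι → ℝ} {x y : X}

theorem HasAddress.exists_eq_symbolicDist_mul (hsim : ∀ i x y, d (φ i x) (φ i y) = σ i * d x y)
    (hx : HasAddress φ x w) (hy : HasAddress φ y w') (hw : w ≠ w') :
    ∃ x₁ y₁, d x y = symbolicDist σ w w' *
      d (φ (w (firstDiff w w')) x₁) (φ (w' (firstDiff w w')) y₁) := by
  set k := firstDiff w w'
  obtain ⟨x₁, rfl⟩ := hx (k + 1)
  obtain ⟨y₁, rfl⟩ := hy (k + 1)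
  refine ⟨x₁, y₁, ?_⟩
  rw [compPrefix, compPrefix, compPrefix_congr fun t ht => (apply_eq_of_lt_firstDiff ht).symm,
    Function.comp_apply, Function.comp_apply, compPrefix_scale hsim, symbolicDist_of_ne hw]

theorem HasAddress.eq [Finite ι] (hσ : ∀ i, σ i ∈ Ioo 0 1)
    (hsim : ∀ i x y, d (φ i x) (φ i y) = σ i * d x y) {D : ℝ} (hD : ∀ x y, d x y ≤ D)
    (hd₀ : ∀ x y, 0 ≤ d x y) (hd : ∀ x y, d x y = 0 ↔ x = y)
    (hx : HasAddress φ x w) (hy : HasAddress φ y w) : x = y := by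
  have : Nonempty ι := ⟨w 0⟩
  obtain ⟨i₀, hi₀⟩ := Finite.exists_max σ
  set r := σ i₀
  have hle k : d x y ≤ r ^ k * |D| := by
    obtain ⟨x₁, rfl⟩ := hx k
    obtain ⟨y₁, rfl⟩ := hy k
    rw [compPrefix_scale hsim]
    refine mul_le_mul ?_ ((hD _ _).trans (le_abs_self D)) (hd₀ _ _) (pow_nonneg (hσ i₀).1.le k)
    calc ∏ t ∈ Finset.range k, σ (w t) ≤ ∏ _t ∈ Finset.range k, r :=
          Finset.prod_le_prod (fun t _ => (hσ _).1.le) fun t _ => hi₀ _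
      _ = r ^ k := by simp
  have hlim : Tendsto (fun k => r ^ k * |D|) atTop (𝓝 0) := by
    simpa using (tendsto_pow_atTop_nhds_zero_of_lt_one (hσ i₀).1.le (hσ i₀).2).mul_const |D|
  exact (hd x y).1 (le_antisymm (ge_of_tendsto' hlim hle) (hd₀ x y))

theorem biLipschitzEquivalent_symbolicDist_of_selfSimilar [Finite ι] (hσ : ∀ i, σ i ∈ Ioo 0 1)
    (hd₀ : ∀ x y, 0 ≤ d x y) (hd : ∀ x y, d x y = 0 ↔ x = y)
    (hsim : ∀ i x y, d (φ i x) (φ i y) = σ i * d x y) (hcover : ∀ x, ∃ i y, φ i y = x)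
    {δ D : ℝ} (hδ : 0 < δ) (hgap : ∀ i j, i ≠ j → ∀ x y, δ ≤ d (φ i x) (φ j y))
    (hD : ∀ x y, d x y ≤ D) (hexists : ∀ w, ∃ x, HasAddress φ x w) :
    BiLipschitzEquivalent (symbolicDist σ) d := by
  choose π hπ using hexists
  have hσ₀ i : 0 < σ i := (hσ i).1
  have hbounds w w' : δ * symbolicDist σ w w' ≤ d (π w) (π w') ∧
      d (π w) (π w') ≤ D * symbolicDist σ w w' := by
    rcases eq_or_ne w w' with rfl | hw
    · simp [(hd _ _).2 rfl]
    · obtain ⟨x₁, y₁, heq⟩ := (hπ w).exists_eq_symbolicDist_mul hsim (hπ w') hw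
      have hq := (symbolicDist_pos hσ₀ hw).le
      rw [heq, mul_comm δ, mul_comm D]
      exact ⟨mul_le_mul_of_nonneg_left (hgap _ _ (apply_firstDiff_ne hw) _ _) hq,
        mul_le_mul_of_nonneg_left (hD _ _) hq⟩
  have hinj : Injective π := by
    intro w w' h
    by_contra hw
    have hlow := (hbounds w w').1
    rw [h, (hd _ _).2 rfl] at hlow
    exact (mul_pos hδ (symbolicDist_pos hσ₀ hw)).not_ge hlow
  have hsurj : Surjective π := fun x => by
    obtain ⟨w, hw⟩ := exists_hasAddress_of_cover hcover x
    exact ⟨w, (hπ w).eq hσ hsim hD hd₀ hd hw⟩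
  refine ⟨Equiv.ofBijective π ⟨hinj, hsurj⟩, max D δ⁻¹, lt_max_of_lt_right (inv_pos.2 hδ),
    fun w w' => ⟨?_, ?_⟩⟩
  · have hq := symbolicDist_nonneg (fun i => (hσ₀ i).le) w w'
    calc (max D δ⁻¹)⁻¹ * symbolicDist σ w w' ≤ δ * symbolicDist σ w w' :=
          mul_le_mul_of_nonneg_right (inv_le_of_inv_le₀ hδ (le_max_right _ _)) hq
      _ ≤ _ := (hbounds w w').1
  · have hq := symbolicDist_nonneg (fun i => (hσ₀ i).le) w w'
    exact (hbounds w w').2.trans (mul_le_mul_of_nonneg_right (le_max_left _ _) hq)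

end Addresses

theorem IsSimilarity.continuous {X : Type*} [MetricSpace X] {r : ℝ} {φ : X → X}
    (h : IsSimilarity r φ) : Continuous φ :=
  (LipschitzWith.of_dist_le' fun x y => (h x y).le).continuous

theorem exists_pos_le_dist_of_pairwise_disjoint {X ι : Type*} [MetricSpace X] [Finite ι]
    {K : ι → Set X} (hK : ∀ i, IsCompact (K i)) (hdisj : Pairwise (Disjoint on K)) :
    ∃ δ > 0, ∀ i j, i ≠ j → ∀ x ∈ K i, ∀ y ∈ K j, δ ≤ dist x y := by
  have hcompact : IsCompact (⋃ p ∈ {p : ι × ι | p.1 ≠ p.2}, K p.1 ×ˢ K p.2) :=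
    (toFinite _).isCompact_biUnion fun p _ => (hK p.1).prod (hK p.2)
  obtain ⟨δ, hδ, hle⟩ := hcompact.exists_forall_le' continuous_dist.continuousOn (a := 0) <| by
    simp only [mem_iUnion, mem_prod]
    rintro ⟨x, y⟩ ⟨⟨i, j⟩, hij, hx, hy⟩
    exact dist_pos.2 fun hxy => disjoint_left.1 (hdisj hij) hx (hxy ▸ hy)
  exact ⟨δ, hδ, fun i j hij x hx y hy => hle (x, y) (mem_biUnion (x := (i, j)) hij ⟨hx, hy⟩)⟩

theorem exists_pos_le_of_finite {ι : Type*} [Finite ι] {f : ι → ℝ} (hf : ∀ i, 0 < f i) :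
    ∃ δ > 0, ∀ i, δ ≤ f i := by
  rcases isEmpty_or_nonempty ι with hι | hι
  · exact ⟨1, one_pos, isEmptyElim⟩
  · obtain ⟨i₀, hi₀⟩ := Finite.exists_min f
    exact ⟨f i₀, hf i₀, hi₀⟩

theorem IsDustLike.biLipschitzEquivalent_symbolicDist {X : Type*} [MetricSpace X] {m : ℕ}
    {σ : Fin m → ℝ} {E : Set X} (hE : IsDustLike σ E) (hσ : ∀ i, σ i ∈ Ioo 0 1) :
    BiLipschitzEquivalent (symbolicDist σ) (dist : E → E → ℝ) := by
  obtain ⟨hne, hcomp, φ, hφ, hunion, hdisj⟩ := hE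
  have hmaps i : MapsTo (φ i) E E := fun x hx => by
    rw [hunion]
    exact mem_iUnion_of_mem i (mem_image_of_mem _ hx)
  set ψ : Fin m → E → E := fun i => (hmaps i).restrict
  have hψ i : IsSimilarity (σ i) (ψ i) := fun x y => hφ i x y
  have : CompactSpace E := isCompact_iff_compactSpace.1 hcomp
  have : Nonempty E := hne.to_subtype
  obtain ⟨δ, hδ, hgap⟩ := exists_pos_le_dist_of_pairwise_disjoint
    (fun i => hcomp.image (hφ i).continuous) hdisj
  refine biLipschitzEquivalent_symbolicDist_of_selfSimilar (φ := ψ) hσ (fun _ _ => dist_nonneg)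
    (fun _ _ => dist_eq_zero) hψ (fun x => ?_) hδ
    (fun i j hij x y => hgap i j hij _ (mem_image_of_mem _ x.2) _ (mem_image_of_mem _ y.2))
    (fun x y => dist_le_diam_of_mem (s := E) hcomp.isBounded x.2 y.2)
    (exists_hasAddress_of_compactSpace fun i => (hψ i).continuous)
  have hx : (x : X) ∈ ⋃ i, φ i '' E := hunion ▸ x.2
  obtain ⟨i, y, hy, hyx⟩ := mem_iUnion.1 hx
  exact ⟨i, ⟨y, hy⟩, Subtype.ext hyx⟩

theorem DerivedFrom.biLipschitzEquivalent_symbolicDist {a b : Σ k : ℕ, Fin k → ℝ}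
    (h : DerivedFrom a b) (ha : ∀ i, a.2 i ∈ Ioo 0 1) :
    BiLipschitzEquivalent (symbolicDist b.2) (symbolicDist a.2) := by
  obtain ⟨j, hne, hdisj, hcov, hb⟩ := h
  have ha₀ i : 0 ≤ a.2 i := (ha i).1.le
  have ha₁ i : a.2 i ≤ 1 := (ha i).2.le
  have hb' r : b.2 r ∈ Ioo 0 1 := by
    rw [hb]
    refine ⟨List.prod_pos fun x hx => ?_, ?_⟩
    · obtain ⟨i, -, rfl⟩ := List.mem_map.1 hx
      exact (ha i).1
    · simpa using List.prod_map_lt_prod_map (hne r) a.2 (fun _ => 1) (fun i _ => (ha i).1)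
        fun i _ => (ha i).2
  obtain ⟨δ, hδ, hδb⟩ := exists_pos_le_of_finite fun r => (hb' r).1
  refine biLipschitzEquivalent_symbolicDist_of_selfSimilar (φ := fun r u => (j r ++ₛ u).get) hb'
    (symbolicDist_nonneg ha₀) (symbolicDist_eq_zero_iff fun i => (ha i).1)
    (fun r u u' => by rw [hb]; exact symbolicDist_append _ _ _) (fun u => ?_) hδ
    (fun r r' hrr' u u' => ?_) (symbolicDist_le_one ha₀ ha₁) (fun w => ?_)
  · obtain ⟨r, hr⟩ := mem_iUnion.1 (hcov.symm ▸ mem_univ u)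
    obtain ⟨v, hv⟩ := mem_symbCyl_iff.1 hr
    exact ⟨r, v, hv⟩
  · refine (hδb r).trans ?_
    rw [hb]
    exact prod_map_le_symbolicDist ha₀ ha₁ _ _ fun v hv => disjoint_left.1 (hdisj hrr')
      (mem_symbCyl_iff.2 ⟨v, hv⟩) (mem_symbCyl_iff.2 ⟨u', rfl⟩)
  · have : Nonempty (Fin a.1) := ⟨(j (w 0)).head (hne _)⟩
    exact exists_hasAddress_of_compactSpace (fun r => continuous_append_stream (j r)) w

theorem CVEquiv.biLipschitzEquivalent_symbolicDist {d : ℕ} {a b : Σ k : ℕ, Fin k → ℝ}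
    (h : CVEquiv d a b) : BiLipschitzEquivalent (symbolicDist a.2) (symbolicDist b.2) := by
  induction h with
  | refl => exact .refl _
  | tail _ hstep ih =>
    obtain ⟨hu, hv, hder | hder⟩ := hstep
    · exact ih.trans (hder.biLipschitzEquivalent_symbolicDist hu.1).symm
    · exact ih.trans (hder.biLipschitzEquivalent_symbolicDist hv.1)

theorem equivalent_contraction_vectors_lipschitz_equivalent_general
    (d m n : ℕ)
    (ρ : Fin m → ℝ) (τ : Fin n → ℝ)
    (hρ : IsContractionVector d m ρ) (hτ : IsContractionVector d n τ)
    (hequiv : CVEquiv d ⟨m, ρ⟩ ⟨n, τ⟩)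
    (E F : Set (EuclideanSpace ℝ (Fin d)))
    (hE : IsDustLike ρ E) (hF : IsDustLike τ F) :
    LipschitzEquivalent E F :=
  lipschitzEquivalent_of_biLipschitzEquivalent <|
    ((hE.biLipschitzEquivalent_symbolicDist hρ.1).symm.trans
      hequiv.biLipschitzEquivalent_symbolicDist).trans
      (hF.biLipschitzEquivalent_symbolicDist hτ.1)

theorem equivalent_contraction_vectors_lipschitz_equivalent
    (d m n : ℕ) (hd : 1 ≤ d)
    (ρ : Fin m → ℝ) (τ : Fin n → ℝ)
    (hρ : IsContractionVector d m ρ) (hτ : IsContractionVector d n τ)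
    (hequiv : CVEquiv d ⟨m, ρ⟩ ⟨n, τ⟩)
    (E F : Set (EuclideanSpace ℝ (Fin d)))
    (hE : IsDustLike ρ E) (hF : IsDustLike τ F) :
    LipschitzEquivalent E F :=
  equivalent_contraction_vectors_lipschitz_equivalent_general d m n ρ τ hρ hτ hequiv E F hE hF
end
end

section
/- (Falconer–Marsh) Let ρ = (ρ₁, …, ρ_m) and τ = (τ₁, …, τ_n) be contraction vectors for ℝ^d, and suppose E ∈ D(ρ) and F ∈ D(τ) are Lipschitz equivalent. Let s > 0 be their common Hausdorff dimension, so that ρ₁^s + ⋯ + ρ_m^s = 1 = τ₁^s + ⋯ + τ_n^s. Then: (1) the subfield of ℝ generated by ℚ and {ρ₁^s, …, ρ_m^s} equals the subfield of ℝ generated by ℚ and {τ₁^s, …, τ_n^s}; (2) there exist positive integers p, q such that the multiplicative subsemigroup of (ℝ_{>0}, ×) generated by ρ₁^p, …, ρ_m^p is contained in the subsemigroup generated by τ₁, …, τ_n, and the subsemigroup generated by τ₁^q, …, τ_n^q is contained in the subsemigroup generated by ρ₁, …, ρ_m. -/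
open Set Metric MeasureTheory

noncomputable section

/-!
Write `E_i`, `F_j` for the cylinders of `E` and `F` indexed by words and `|i|`, `|j|` for the
products of the corresponding ratios. The first-level pieces of `E` are a positive distance apart,
so the image of `E_i` under a bi-Lipschitz bijection `f : E → F` is separated from the rest of `F`
at scale `≍ |i|`. Hence `f(E_i)` is a finite disjoint union of cylinders `F_j` with `|j| ≍ |i|`,
all lying in the smallest cylinder `F_(top i)` containing `f(E_i)`, and `|top i| ≍ |i|`; its mass
`∑ |j|^s` is `|top i|^s` times the mass `S(W)` of a pattern `W` of suffixes, and only finitely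
many patterns occur.

The density `w(i) = ∑ |j|^s / |i|^s` is bounded and satisfies `w(i) = ∑_u ρ_u^s w(iu)`, so `w(i)`
and `w(it)` are simultaneously as close to `sup w` as we like for suitable `i`. Comparing `f(E_i)`
with `f(E_it)` gives `|t|^s S(W) w(it) = |v|^s S(W') w(i)`, where `top (it) = (top i) v`; since `v`
and the patterns range over finite sets, some configuration occurs for arbitrarily good `i`, and
then `|t|^s S(W) = |v|^s S(W')`. For `t = u` this puts `ρ_u^s` in the field generated by the
`τ_j^s`; for `t = u^g` with `W = W'` (pigeonhole along `i, iu, iu², …`) it gives `ρ_u^g = |v|`.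
-/

lemma Set.Finite.exists_forall_pos_of_monotone {α : Type*} {s : Set α} (hs : s.Finite)
    {P : ℝ → α → Prop} (hP : ∀ x δ δ', δ ≤ δ' → P δ x → P δ' x)
    (h : ∀ δ > 0, ∃ x ∈ s, P δ x) : ∃ x ∈ s, ∀ δ > 0, P δ x := by
  by_contra! hcon
  choose! δ hδ hPδ using hcon
  obtain ⟨x₀, hx₀, -⟩ := h 1 one_pos
  have hne : hs.toFinset.Nonempty := ⟨x₀, hs.mem_toFinset.mpr hx₀⟩
  obtain ⟨x, hx, hPx⟩ := h (hs.toFinset.inf' hne δ)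
    ((Finset.lt_inf'_iff hne).mpr fun x hx => hδ x (hs.mem_toFinset.mp hx))
  exact hPδ x hx (hP x _ _ (Finset.inf'_le δ (hs.mem_toFinset.mpr hx)) hPx)

lemma eq_of_forall_pos_exists_mul_eq_mul {x y W : ℝ} (hx : 0 ≤ x) (hy : 0 ≤ y) (hW : 0 < W)
    (h : ∀ δ > 0, ∃ a ∈ Set.Icc (W - δ) W, ∃ b ∈ Set.Icc (W - δ) W, x * a = y * b) : x = y := by
  have hle : ∀ {x y : ℝ}, 0 ≤ x → 0 ≤ y →
      (∀ δ > 0, ∃ a ∈ Set.Icc (W - δ) W, ∃ b ∈ Set.Icc (W - δ) W, x * a = y * b) → x ≤ y := by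
    intro x y hx hy h
    have hlim : Filter.Tendsto (fun δ => x * (W - δ)) (nhdsWithin 0 (Set.Ioi 0))
        (nhds (x * W)) := by
      have : Filter.Tendsto (fun δ : ℝ => x * (W - δ)) (nhds 0) (nhds (x * (W - 0))) :=
        (continuous_const.mul (continuous_const.sub continuous_id)).tendsto 0
      simpa using this.mono_left nhdsWithin_le_nhds
    refine le_of_mul_le_mul_right (le_of_tendsto hlim
      (eventually_nhdsWithin_of_forall fun δ hδ => ?_)) hW
    obtain ⟨a, ha, b, hb, hab⟩ := h δ hδ
    calc x * (W - δ) ≤ x * a := mul_le_mul_of_nonneg_left ha.1 hx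
      _ = y * b := hab
      _ ≤ y * W := mul_le_mul_of_nonneg_left hb.2 hy
  refine le_antisymm (hle hx hy h) (hle hy hx fun δ hδ => ?_)
  obtain ⟨a, ha, b, hb, hab⟩ := h δ hδ
  exact ⟨b, hb, a, ha, hab.symm⟩

lemma Subsemigroup.pow_mem {M : Type*} [Monoid M] (S : Subsemigroup M) {x : M} (hx : x ∈ S)
    {n : ℕ} (hn : 0 < n) : x ^ n ∈ S := by
  induction n with
  | zero => omega
  | succ n ih =>
    rcases n.eq_zero_or_pos with rfl | hn
    · simpa using hx
    · simpa [pow_succ] using S.mul_mem (ih hn) hx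

lemma Subsemigroup.exists_pow_mem_of_forall {M : Type*} [Monoid M] {ι : Type*} [Fintype ι]
    (S : Subsemigroup M) (x : ι → M) (h : ∀ u, ∃ g, 0 < g ∧ x u ^ g ∈ S) :
    ∃ p, 0 < p ∧ ∀ u, x u ^ p ∈ S := by
  choose g hg hgS using h
  have hprod : 0 < ∏ u, g u := Finset.prod_pos fun u _ => hg u
  refine ⟨∏ u, g u, hprod, fun u => ?_⟩
  obtain ⟨k, hk⟩ := Finset.dvd_prod_of_mem g (Finset.mem_univ u)
  rw [hk, pow_mul]
  exact S.pow_mem (hgS u) (Nat.pos_of_mul_pos_left (hk ▸ hprod))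

lemma nontrivial_of_sum_rpow_eq_one {ι : Type*} [Fintype ι] {σ : ι → ℝ}
    (hσ : ∀ u, σ u ∈ Set.Ioo 0 1) {s : ℝ} (hs : 0 < s) (h : ∑ u, σ u ^ s = 1) : Nontrivial ι := by
  by_contra hι
  rw [not_nontrivial_iff_subsingleton] at hι
  cases isEmpty_or_nonempty ι with
  | inl _ => simp at h
  | inr hne =>
    obtain ⟨u⟩ := hne
    rw [Fintype.sum_subsingleton _ u] at h
    exact (Real.rpow_lt_one (hσ u).1.le (hσ u).2 hs).ne h

lemma exists_pos_lt_one_mul_lt {a b : ℝ} (ha : 0 < a) (hb : 0 ≤ b) :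
    ∃ c, 0 < c ∧ c < 1 ∧ b * c < a := by
  obtain ⟨c, hc, hbc⟩ := exists_pos_mul_lt ha b
  exact ⟨min c (1 / 2), lt_min hc (by norm_num), (min_le_right _ _).trans_lt (by norm_num),
    (mul_le_mul_of_nonneg_left (min_le_left _ _) hb).trans_lt hbc⟩

lemma LipschitzEquivalent.symm {X : Type*} [MetricSpace X] {E F : Set X}
    (h : LipschitzEquivalent E F) : LipschitzEquivalent F E := by
  obtain ⟨f, C, hC, hbij, hlip⟩ := h
  cases isEmpty_or_nonempty X with
  | inl _ => exact ⟨f, C, hC, by simp [Set.eq_empty_of_isEmpty], fun x => isEmptyElim x⟩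
  | inr _ => ?_
  have hinv := hbij.invOn_invFunOn
  have hbij' : Set.BijOn (Function.invFunOn f E) F E := hbij.symm hinv.symm
  refine ⟨Function.invFunOn f E, C, hC, hbij', fun x hx y hy => ?_⟩
  have hx' := hbij'.mapsTo hx
  have hy' := hbij'.mapsTo hy
  obtain ⟨hlo, hup⟩ := hlip _ hx' _ hy'
  rw [hinv.2 hx, hinv.2 hy] at hlo hup
  exact ⟨(inv_mul_le_iff₀ hC).mpr hup, (inv_mul_le_iff₀ hC).mp hlo⟩

section WordRatio

variable {ι : Type*}

def wordRatio (σ : ι → ℝ) (w : List ι) : ℝ := (w.map σ).prod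

variable (σ : ι → ℝ)

@[simp] lemma wordRatio_nil : wordRatio σ [] = 1 := rfl

@[simp] lemma wordRatio_cons (u : ι) (w : List ι) :
    wordRatio σ (u :: w) = σ u * wordRatio σ w := by
  simp [wordRatio]

@[simp] lemma wordRatio_append (w w' : List ι) :
    wordRatio σ (w ++ w') = wordRatio σ w * wordRatio σ w' := by
  simp [wordRatio]

@[simp] lemma wordRatio_replicate (t : ℕ) (u : ι) :
    wordRatio σ (List.replicate t u) = σ u ^ t := by
  simp [wordRatio]

lemma wordRatio_ofFn {t : ℕ} (f : Fin t → ι) : wordRatio σ (List.ofFn f) = ∏ k, σ (f k) := by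
  simp [wordRatio, List.map_ofFn, List.prod_ofFn]

variable {σ}

lemma wordRatio_pos (hσ : ∀ u, 0 < σ u) (w : List ι) : 0 < wordRatio σ w := by
  induction w with
  | nil => simp
  | cons u w ih => simpa using mul_pos (hσ u) ih

lemma wordRatio_nonneg (h0 : ∀ u, 0 ≤ σ u) (w : List ι) : 0 ≤ wordRatio σ w :=
  List.prod_nonneg (by simpa using fun v _ => h0 v)

lemma wordRatio_le_one (h0 : ∀ u, 0 ≤ σ u) (h1 : ∀ u, σ u ≤ 1) (w : List ι) :
    wordRatio σ w ≤ 1 := by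
  induction w with
  | nil => simp
  | cons u w ih => simpa using mul_le_one₀ (h1 u) (wordRatio_nonneg h0 w) ih

lemma wordRatio_le_of_prefix (h0 : ∀ u, 0 ≤ σ u) (h1 : ∀ u, σ u ≤ 1) {w w' : List ι}
    (h : w <+: w') : wordRatio σ w' ≤ wordRatio σ w := by
  obtain ⟨t, rfl⟩ := h
  rw [wordRatio_append]
  exact mul_le_of_le_one_right (wordRatio_nonneg h0 w) (wordRatio_le_one h0 h1 t)

lemma wordRatio_rpow (h0 : ∀ u, 0 ≤ σ u) (s : ℝ) (w : List ι) :
    wordRatio σ w ^ s = wordRatio (fun u => σ u ^ s) w := by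
  induction w with
  | nil => simp
  | cons u w ih =>
    rw [wordRatio_cons, wordRatio_cons, ← ih, Real.mul_rpow (h0 u) (wordRatio_nonneg h0 w)]

lemma exists_forall_length_wordRatio_lt [Finite ι] (hσ : ∀ u, σ u ∈ Set.Ioo 0 1) {c : ℝ}
    (hc : 0 < c) : ∃ N, ∀ w : List ι, N ≤ w.length → wordRatio σ w < c := by
  obtain ⟨q, hq0, hq1, hσq⟩ : ∃ q, 0 ≤ q ∧ q < 1 ∧ ∀ u, σ u ≤ q := by
    cases isEmpty_or_nonempty ι with
    | inl _ => exact ⟨0, le_rfl, one_pos, isEmptyElim⟩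
    | inr _ =>
      obtain ⟨v, hv⟩ := Finite.exists_max σ
      exact ⟨σ v, (hσ v).1.le, (hσ v).2, hv⟩
  have hpow : ∀ w : List ι, wordRatio σ w ≤ q ^ w.length := by
    intro w
    induction w with
    | nil => simp
    | cons u w ih =>
      rw [wordRatio_cons, List.length_cons, pow_succ']
      exact mul_le_mul (hσq u) ih (wordRatio_nonneg (fun v => (hσ v).1.le) w) hq0
  obtain ⟨N, hN⟩ := exists_pow_lt_of_lt_one hc hq1
  exact ⟨N, fun w hw => (hpow w).trans_lt ((pow_le_pow_of_le_one hq0 hq1.le hw).trans_lt hN)⟩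

lemma finite_setOf_le_wordRatio [Finite ι] (hσ : ∀ u, σ u ∈ Set.Ioo 0 1) {c : ℝ} (hc : 0 < c) :
    {w | c ≤ wordRatio σ w}.Finite := by
  obtain ⟨N, hN⟩ := exists_forall_length_wordRatio_lt hσ hc
  exact (List.finite_length_le ι N).subset fun w (hw : c ≤ _) =>
    (not_le.mp fun h => (hN w h).not_ge hw).le

lemma wordRatio_mem_subfieldClosure (w : List ι) :
    wordRatio σ w ∈ Subfield.closure (Set.range σ) :=
  list_prod_mem fun x hx => by
    obtain ⟨u, -, rfl⟩ := List.mem_map.mp hx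
    exact Subfield.subset_closure ⟨u, rfl⟩

lemma wordRatio_mem_subsemigroupClosure {w : List ι} (hw : w ≠ []) :
    wordRatio σ w ∈ Subsemigroup.closure (Set.range σ) := by
  induction w with
  | nil => exact absurd rfl hw
  | cons u w ih =>
    rw [wordRatio_cons]
    rcases eq_or_ne w [] with rfl | hw'
    · simpa using Subsemigroup.subset_closure (Set.mem_range_self u)
    · exact mul_mem (Subsemigroup.subset_closure (Set.mem_range_self u)) (ih hw')

def wordsOfLength (ι : Type*) [Fintype ι] (t : ℕ) : Finset (List ι) :=
  (Finset.univ : Finset (Fin t → ι)).map ⟨List.ofFn, List.ofFn_injective⟩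

lemma mem_wordsOfLength [Fintype ι] {t : ℕ} {w : List ι} :
    w ∈ wordsOfLength ι t ↔ w.length = t := by
  simp only [wordsOfLength, Finset.mem_map, Finset.mem_univ, true_and, Function.Embedding.coeFn_mk]
  constructor
  · rintro ⟨f, rfl⟩
    exact List.length_ofFn
  · rintro rfl
    exact ⟨w.get, List.ofFn_get w⟩

lemma sum_wordsOfLength_wordRatio_append_rpow [Fintype ι] (h0 : ∀ u, 0 ≤ σ u) {s : ℝ}
    (hsum : ∑ u, σ u ^ s = 1) (j : List ι) (t : ℕ) :
    ∑ w ∈ wordsOfLength ι t, wordRatio σ (j ++ w) ^ s = wordRatio σ j ^ s := by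
  simp only [wordRatio_append, Real.mul_rpow (wordRatio_nonneg h0 _) (wordRatio_nonneg h0 _),
    ← Finset.mul_sum, wordRatio_rpow h0 s, wordsOfLength, Finset.sum_map,
    Function.Embedding.coeFn_mk, wordRatio_ofFn]
  rw [← Fintype.sum_pow (fun u => σ u ^ s), hsum, one_pow, mul_one]

end WordRatio

section Harmonic

variable {ι : Type*} [Fintype ι] {p : ι → ℝ} {w : List ι → ℝ}

lemma sSup_sub_le_div_of_harmonic (hp : ∀ u, 0 < p u) (hp1 : ∑ u, p u = 1)
    (hw : BddAbove (Set.range w)) (harm : ∀ i, w i = ∑ u, p u * w (i ++ [u])) (i t : List ι) :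
    sSup (Set.range w) - w (i ++ t) ≤ (sSup (Set.range w) - w i) / wordRatio p t := by
  set W := sSup (Set.range w)
  have hle : ∀ j, w j ≤ W := fun j => le_csSup hw (Set.mem_range_self j)
  have step : ∀ j u, p u * (W - w (j ++ [u])) ≤ W - w j := by
    intro j u
    have hsum : W - w j = ∑ u', p u' * (W - w (j ++ [u'])) := by
      simp only [mul_sub, Finset.sum_sub_distrib, ← Finset.sum_mul, hp1, one_mul, ← harm]
    rw [hsum]
    exact Finset.single_le_sum (f := fun u' => p u' * (W - w (j ++ [u'])))
      (fun u' _ => mul_nonneg (hp u').le (sub_nonneg.mpr (hle _))) (Finset.mem_univ u)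
  induction t generalizing i with
  | nil => simp
  | cons u t ih =>
    have hpos := wordRatio_pos hp t
    calc W - w (i ++ u :: t) = W - w ((i ++ [u]) ++ t) := by simp
      _ ≤ (W - w (i ++ [u])) / wordRatio p t := ih (i ++ [u])
      _ ≤ (W - w i) / p u / wordRatio p t := by
        gcongr
        rw [le_div_iff₀ (hp u), mul_comm]
        exact step i u
      _ = (W - w i) / wordRatio p (u :: t) := by rw [wordRatio_cons, div_div]

lemma exists_forall_prefix_sSup_sub_le_of_harmonic (hp : ∀ u, 0 < p u) (hp1 : ∑ u, p u = 1)
    (hw : BddAbove (Set.range w)) (harm : ∀ i, w i = ∑ u, p u * w (i ++ [u]))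
    (t : List ι) {δ : ℝ} (hδ : 0 < δ) :
    ∃ i, ∀ t', t' <+: t → sSup (Set.range w) - δ ≤ w (i ++ t') := by
  set W := sSup (Set.range w)
  have hp0 : ∀ u, 0 ≤ p u := fun u => (hp u).le
  have hp1' : ∀ u, p u ≤ 1 := fun u =>
    hp1 ▸ Finset.single_le_sum (fun u' _ => hp0 u') (Finset.mem_univ u)
  have hm := wordRatio_pos hp t
  obtain ⟨_, ⟨i, rfl⟩, hi⟩ := exists_lt_of_lt_csSup (Set.range_nonempty w)
    (sub_lt_self W (mul_pos hδ hm))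
  refine ⟨i, fun t' ht' => ?_⟩
  have hWi : 0 ≤ W - w i := sub_nonneg.mpr (le_csSup hw (Set.mem_range_self i))
  have := sSup_sub_le_div_of_harmonic hp hp1 hw harm i t'
  have : (W - w i) / wordRatio p t' ≤ (W - w i) / wordRatio p t :=
    div_le_div_of_nonneg_left hWi hm (wordRatio_le_of_prefix hp0 hp1' ht')
  have : (W - w i) / wordRatio p t < δ := by rw [div_lt_iff₀ hm]; linarith
  linarith

end Harmonic

structure DustSystem (ι X : Type*) [MetricSpace X] where
  ratio : ι → ℝ
  map : ι → X → X
  set : Set X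
  ratio_mem : ∀ u, ratio u ∈ Set.Ioo 0 1
  isSimilarity : ∀ u, IsSimilarity (ratio u) (map u)
  nonempty : set.Nonempty
  isCompact : IsCompact set
  eq_iUnion : set = ⋃ u, map u '' set
  pairwise_disjoint : Pairwise fun u v => Disjoint (map u '' set) (map v '' set)

namespace DustSystem

variable {ι X : Type*} [MetricSpace X] (D : DustSystem ι X)

lemma ratio_pos (u : ι) : 0 < D.ratio u := (D.ratio_mem u).1

lemma ratio_nonneg (u : ι) : 0 ≤ D.ratio u := (D.ratio_pos u).le

lemma ratio_le_one (u : ι) : D.ratio u ≤ 1 := (D.ratio_mem u).2.le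

def wordMap (w : List ι) : X → X := w.foldr (fun u g => D.map u ∘ g) id

def cylinder (w : List ι) : Set X := D.wordMap w '' D.set

@[simp] lemma wordMap_nil : D.wordMap [] = id := rfl

@[simp] lemma wordMap_cons (u : ι) (w : List ι) : D.wordMap (u :: w) = D.map u ∘ D.wordMap w :=
  rfl

lemma wordMap_append (w w' : List ι) : D.wordMap (w ++ w') = D.wordMap w ∘ D.wordMap w' := by
  induction w with
  | nil => rfl
  | cons u w ih => simp [ih, Function.comp_assoc]

lemma dist_wordMap (w : List ι) (x y : X) :
    dist (D.wordMap w x) (D.wordMap w y) = wordRatio D.ratio w * dist x y := by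
  induction w with
  | nil => simp
  | cons u w ih => simp [D.isSimilarity u _, ih, mul_assoc]

lemma wordMap_injective (w : List ι) : Function.Injective (D.wordMap w) := fun x y h => by
  have : wordRatio D.ratio w * dist x y = 0 := by rw [← dist_wordMap, h, dist_self]
  simpa [(wordRatio_pos D.ratio_pos w).ne'] using this

@[simp] lemma cylinder_nil : D.cylinder [] = D.set := Set.image_id _

lemma cylinder_cons (u : ι) (w : List ι) : D.cylinder (u :: w) = D.map u '' D.cylinder w :=
  Set.image_comp (D.map u) (D.wordMap w) D.set

lemma cylinder_append (w w' : List ι) :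
    D.cylinder (w ++ w') = D.wordMap w '' D.cylinder w' := by
  rw [cylinder, wordMap_append, Set.image_comp]
  rfl

lemma cylinder_singleton (u : ι) : D.cylinder [u] = D.map u '' D.set := by
  rw [cylinder_cons, cylinder_nil]

lemma map_image_subset (u : ι) : D.map u '' D.set ⊆ D.set := by
  conv_rhs => rw [D.eq_iUnion]
  exact Set.subset_iUnion (fun v => D.map v '' D.set) u

lemma cylinder_nonempty (w : List ι) : (D.cylinder w).Nonempty := D.nonempty.image _

lemma cylinder_subset (w : List ι) : D.cylinder w ⊆ D.set := by
  induction w with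
  | nil => simp
  | cons u w ih =>
    rw [cylinder_cons]
    exact (Set.image_mono ih).trans (D.map_image_subset u)

lemma cylinder_subset_of_prefix {w w' : List ι} (h : w <+: w') : D.cylinder w' ⊆ D.cylinder w := by
  obtain ⟨t, rfl⟩ := h
  rw [cylinder_append]
  exact Set.image_mono (D.cylinder_subset t)

lemma cylinder_eq_iUnion (w : List ι) : D.cylinder w = ⋃ u, D.cylinder (w ++ [u]) := by
  conv_lhs => rw [cylinder, D.eq_iUnion, Set.image_iUnion]
  simp only [cylinder_append, cylinder_singleton]

lemma prefix_or_prefix_of_not_disjoint :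
    ∀ {w w' : List ι}, ¬ Disjoint (D.cylinder w) (D.cylinder w') → w <+: w' ∨ w' <+: w
  | [], _, _ => Or.inl List.nil_prefix
  | _ :: _, [], _ => Or.inr List.nil_prefix
  | u :: w, u' :: w', h => by
    rw [cylinder_cons, cylinder_cons] at h
    obtain rfl : u = u' := by
      by_contra huu
      exact h ((D.pairwise_disjoint huu).mono (Set.image_mono (D.cylinder_subset w))
        (Set.image_mono (D.cylinder_subset w')))
    have hw : ¬ Disjoint (D.cylinder w) (D.cylinder w') := fun hd =>
      h (Set.disjoint_image_of_injective (D.wordMap_injective [u]) hd)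
    simpa [List.cons_prefix_cons] using prefix_or_prefix_of_not_disjoint hw

lemma disjoint_cylinder_append_singleton (w : List ι) {u u' : ι} (h : u ≠ u') :
    Disjoint (D.cylinder (w ++ [u])) (D.cylinder (w ++ [u'])) := by
  by_contra hnd
  rcases D.prefix_or_prefix_of_not_disjoint hnd with hp | hp
  · exact h (by simpa using hp.eq_of_length (by simp))
  · exact h (by simpa using (hp.eq_of_length (by simp)).symm)

lemma dist_le_of_mem_cylinder {w : List ι} {x y : X} (hx : x ∈ D.cylinder w)
    (hy : y ∈ D.cylinder w) : dist x y ≤ wordRatio D.ratio w * Metric.diam D.set := by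
  obtain ⟨x, hx, rfl⟩ := hx
  obtain ⟨y, hy, rfl⟩ := hy
  rw [dist_wordMap]
  exact mul_le_mul_of_nonneg_left (Metric.dist_le_diam_of_mem D.isCompact.isBounded hx hy)
    (wordRatio_nonneg D.ratio_nonneg w)

lemma exists_length_eq_mem_cylinder (N : ℕ) {x : X} (hx : x ∈ D.set) :
    ∃ w : List ι, w.length = N ∧ x ∈ D.cylinder w := by
  induction N generalizing x with
  | zero => exact ⟨[], rfl, by simpa using hx⟩
  | succ N ih =>
    rw [D.eq_iUnion] at hx
    obtain ⟨u, y, hy, rfl⟩ := Set.mem_iUnion.mp hx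
    obtain ⟨w, hw, hyw⟩ := ih hy
    exact ⟨u :: w, by simp [hw], D.cylinder_cons u w ▸ Set.mem_image_of_mem _ hyw⟩

lemma exists_pos_le_ratio [Finite ι] : ∃ q > 0, ∀ u, q ≤ D.ratio u := by
  cases isEmpty_or_nonempty ι with
  | inl _ => exact ⟨1, one_pos, isEmptyElim⟩
  | inr _ =>
    obtain ⟨v, hv⟩ := Finite.exists_min D.ratio
    exact ⟨D.ratio v, D.ratio_pos v, hv⟩

def cut (r : ℝ) : Set (List ι) :=
  {w | wordRatio D.ratio w ≤ r ∧ ∀ w', w' <+: w → w' ≠ w → r < wordRatio D.ratio w'}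

lemma exists_mem_cut_mem_cylinder [Finite ι] {r : ℝ} (hr : 0 < r) {x : X} (hx : x ∈ D.set) :
    ∃ w ∈ D.cut r, x ∈ D.cylinder w := by
  classical
  obtain ⟨N, hN⟩ := exists_forall_length_wordRatio_lt D.ratio_mem hr
  obtain ⟨w, hw, hxw⟩ := D.exists_length_eq_mem_cylinder N hx
  have hex : ∃ t, wordRatio D.ratio (w.take t) ≤ r :=
    ⟨N, by rw [List.take_of_length_le hw.le]; exact (hN w hw.ge).le⟩
  refine ⟨w.take (Nat.find hex), ⟨Nat.find_spec hex, fun w' hw' hne => ?_⟩,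
    D.cylinder_subset_of_prefix (List.take_prefix _ _) hxw⟩
  have hlen : w'.length < Nat.find hex :=
    (lt_of_le_of_ne hw'.length_le fun h => hne (hw'.eq_of_length h)).trans_le
      (List.length_take_le _ _)
  rw [List.prefix_iff_eq_take.mp (hw'.trans (List.take_prefix _ _))]
  exact not_le.mp (Nat.find_min hex hlen)

lemma pairwise_disjoint_cut (r : ℝ) :
    (D.cut r).PairwiseDisjoint D.cylinder := by
  intro w hw w' hw' hne
  by_contra h
  rcases D.prefix_or_prefix_of_not_disjoint h with hp | hp
  · exact (hw'.2 w hp hne).not_ge hw.1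
  · exact (hw.2 w' hp hne.symm).not_ge hw'.1

lemma mul_lt_wordRatio_of_mem_cut {q r : ℝ} (hq : ∀ u, q ≤ D.ratio u) (hr : r < 1) {w : List ι}
    (hw : w ∈ D.cut r) : q * r < wordRatio D.ratio w := by
  have hne : w ≠ [] := by
    rintro rfl
    exact hr.not_ge (by simpa using hw.1)
  have hr0 : 0 < r := (wordRatio_pos D.ratio_pos w).trans_le hw.1
  have hdrop : r < wordRatio D.ratio w.dropLast := by
    refine hw.2 _ (List.dropLast_prefix w) fun h => ?_
    have := congrArg List.length h
    rw [List.length_dropLast] at this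
    have := List.length_pos_iff.mpr hne
    omega
  rw [← List.dropLast_append_getLast hne, wordRatio_append, wordRatio_cons, wordRatio_nil,
    mul_one, mul_comm (wordRatio _ _)]
  exact mul_lt_mul' (hq _) hdrop hr0.le (D.ratio_pos _)

lemma finite_cut [Finite ι] {r : ℝ} (hr0 : 0 < r) (hr1 : r < 1) : (D.cut r).Finite := by
  obtain ⟨q, hq, hqu⟩ := D.exists_pos_le_ratio
  exact (finite_setOf_le_wordRatio D.ratio_mem (mul_pos hq hr0)).subset fun w hw =>
    (D.mul_lt_wordRatio_of_mem_cut hqu hr1 hw).le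

open Classical in
lemma sum_rpow_eq_sum_wordsOfLength [Fintype ι] {s : ℝ} (hsum : ∑ u, D.ratio u ^ s = 1)
    {T : Finset (List ι)}
    (hT : (T : Set (List ι)).PairwiseDisjoint D.cylinder)
    {K : ℕ} (hK : ∀ j ∈ T, j.length ≤ K) :
    ∑ j ∈ T, wordRatio D.ratio j ^ s =
      ∑ w ∈ wordsOfLength ι K with D.cylinder w ⊆ ⋃ j ∈ T, D.cylinder j,
        wordRatio D.ratio w ^ s := by
  have hfilter : {w ∈ wordsOfLength ι K | D.cylinder w ⊆ ⋃ j ∈ T, D.cylinder j} =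
      T.biUnion fun j => (wordsOfLength ι (K - j.length)).image (j ++ ·) := by
    ext w
    simp only [Finset.mem_filter, Finset.mem_biUnion, Finset.mem_image, mem_wordsOfLength]
    constructor
    · rintro ⟨hw, hsub⟩
      obtain ⟨x, hx⟩ := D.cylinder_nonempty w
      obtain ⟨j, hj, hxj⟩ := Set.mem_iUnion₂.mp (hsub hx)
      have hjw : j <+: w := by
        rcases D.prefix_or_prefix_of_not_disjoint (Set.not_disjoint_iff.mpr ⟨x, hx, hxj⟩) with h | h
        · rw [h.eq_of_length (le_antisymm h.length_le (hw ▸ hK j hj))]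
        · exact h
      obtain ⟨v, rfl⟩ := hjw
      exact ⟨j, hj, v, by simp at hw; omega, rfl⟩
    · rintro ⟨j, hj, v, hv, rfl⟩
      refine ⟨by simp [hv, hK j hj], fun x hx => Set.mem_iUnion₂.mpr ⟨j, hj, ?_⟩⟩
      exact D.cylinder_subset_of_prefix (List.prefix_append j v) hx
  rw [hfilter, Finset.sum_biUnion]
  · refine Finset.sum_congr rfl fun j _ => ?_
    rw [Finset.sum_image fun _ _ _ _ h => List.append_cancel_left h,
      sum_wordsOfLength_wordRatio_append_rpow D.ratio_nonneg hsum]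
  · intro j hj j' hj' hne
    refine Finset.disjoint_left.mpr fun w hw hw' => hne (hT.eq hj hj' fun hd => ?_)
    obtain ⟨v, -, rfl⟩ := Finset.mem_image.mp hw
    obtain ⟨v', -, hv'⟩ := Finset.mem_image.mp hw'
    obtain ⟨x, hx⟩ := D.cylinder_nonempty (j ++ v)
    exact Set.disjoint_left.mp hd (D.cylinder_subset_of_prefix (List.prefix_append j v) hx)
      (D.cylinder_subset_of_prefix (hv' ▸ List.prefix_append j' v') hx)

lemma sum_rpow_eq_of_biUnion_eq [Fintype ι] {s : ℝ} (hsum : ∑ u, D.ratio u ^ s = 1)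
    {T T' : Finset (List ι)}
    (hT : (T : Set (List ι)).PairwiseDisjoint D.cylinder)
    (hT' : (T' : Set (List ι)).PairwiseDisjoint D.cylinder)
    (h : ⋃ j ∈ T, D.cylinder j = ⋃ j ∈ T', D.cylinder j) :
    ∑ j ∈ T, wordRatio D.ratio j ^ s = ∑ j ∈ T', wordRatio D.ratio j ^ s := by
  classical
  have hK : ∀ j ∈ T ∪ T', j.length ≤ (T ∪ T').sup List.length := fun j hj => Finset.le_sup hj
  rw [D.sum_rpow_eq_sum_wordsOfLength hsum hT fun j hj => hK j (Finset.mem_union_left _ hj),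
    D.sum_rpow_eq_sum_wordsOfLength hsum hT' fun j hj => hK j (Finset.mem_union_right _ hj), h]

lemma sum_rpow_eq_sum_sum_of_iUnion_eq [Fintype ι] {s : ℝ} (hsum : ∑ u, D.ratio u ^ s = 1)
    {α : Type*} [Fintype α] {P : Finset (List ι)} {Q : α → Finset (List ι)}
    (hP : (P : Set (List ι)).PairwiseDisjoint D.cylinder)
    (hQ : ∀ a, (Q a : Set (List ι)).PairwiseDisjoint D.cylinder)
    (hQQ : Pairwise fun a b => Disjoint (⋃ j ∈ Q a, D.cylinder j) (⋃ j ∈ Q b, D.cylinder j))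
    (hPQ : ⋃ j ∈ P, D.cylinder j = ⋃ a, ⋃ j ∈ Q a, D.cylinder j) :
    ∑ j ∈ P, wordRatio D.ratio j ^ s = ∑ a, ∑ j ∈ Q a, wordRatio D.ratio j ^ s := by
  classical
  have hsub : ∀ a, ∀ j ∈ Q a, D.cylinder j ⊆ ⋃ j ∈ Q a, D.cylinder j :=
    fun a j hj => Set.subset_biUnion_of_mem (u := D.cylinder) hj
  rw [← Finset.sum_biUnion fun a _ b _ hab => Finset.disjoint_left.mpr fun j ha hb =>
    (D.cylinder_nonempty j).ne_empty ((hQQ hab).mono (hsub a j ha) (hsub b j hb)).eq_bot_of_self]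
  refine D.sum_rpow_eq_of_biUnion_eq hsum hP ?_ ?_
  · intro j hj j' hj' hne
    simp only [Finset.coe_biUnion, Finset.coe_univ, Set.mem_univ, Set.iUnion_true,
      Set.mem_iUnion, Finset.mem_coe] at hj hj'
    obtain ⟨a, ha⟩ := hj
    obtain ⟨b, hb⟩ := hj'
    rcases eq_or_ne a b with rfl | hab
    · exact hQ a ha hb hne
    · exact (hQQ hab).mono (hsub a j ha) (hsub b j' hb)
  · rw [hPQ, Finset.set_biUnion_biUnion]
    simp

lemma cylinder_subset_of_separated {A : Set X} {δ : ℝ}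
    (hA : ∀ x ∈ A, ∀ y ∈ D.set, y ∉ A → δ ≤ dist x y) {w : List ι}
    (hw : wordRatio D.ratio w * Metric.diam D.set < δ) (hmeet : (D.cylinder w ∩ A).Nonempty) :
    D.cylinder w ⊆ A := by
  obtain ⟨x, hxw, hxA⟩ := hmeet
  intro y hy
  by_contra hyA
  exact (hA x hxA y (D.cylinder_subset w hy) hyA).not_gt
    ((D.dist_le_of_mem_cylinder hxw hy).trans_lt hw)

lemma iUnion_cut_eq_of_separated [Finite ι] {A : Set X} (hA : A ⊆ D.set) {δ r : ℝ}
    (hsep : ∀ x ∈ A, ∀ y ∈ D.set, y ∉ A → δ ≤ dist x y) (hr : 0 < r)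
    (hrδ : r * Metric.diam D.set < δ) :
    ⋃ j ∈ {j ∈ D.cut r | (D.cylinder j ∩ A).Nonempty}, D.cylinder j = A := by
  refine subset_antisymm (Set.iUnion₂_subset fun j hj => D.cylinder_subset_of_separated hsep
    ((mul_le_mul_of_nonneg_right hj.1.1 Metric.diam_nonneg).trans_lt hrδ) hj.2) fun x hx => ?_
  obtain ⟨j, hj, hxj⟩ := D.exists_mem_cut_mem_cylinder hr (hA hx)
  exact Set.mem_iUnion₂.mpr ⟨j, ⟨hj, x, hxj, hx⟩, hxj⟩

lemma exists_forall_subset_cylinder_prefix [Finite ι] {A : Set X} (hA : A ⊆ D.set) {x y : X}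
    (hx : x ∈ A) (hy : y ∈ A) (hxy : x ≠ y) :
    ∃ j, A ⊆ D.cylinder j ∧ ∀ j', A ⊆ D.cylinder j' → j' <+: j := by
  have hdiam : 0 < Metric.diam D.set := (dist_pos.mpr hxy).trans_le
    (Metric.dist_le_diam_of_mem D.isCompact.isBounded (hA hx) (hA hy))
  have hfin : {j | A ⊆ D.cylinder j}.Finite :=
    (finite_setOf_le_wordRatio D.ratio_mem (div_pos (dist_pos.mpr hxy) hdiam)).subset
      fun j hj => (div_le_iff₀ hdiam).mpr (D.dist_le_of_mem_cylinder (hj hx) (hj hy))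
  obtain ⟨j, hj, hjmax⟩ := hfin.exists_maximalFor List.length _ ⟨[], by simpa using hA⟩
  refine ⟨j, hj, fun j' hj' => ?_⟩
  rcases D.prefix_or_prefix_of_not_disjoint (Set.not_disjoint_iff.mpr ⟨x, hj' hx, hj hx⟩) with h | h
  · exact h
  · rw [h.eq_of_length (le_antisymm h.length_le (hjmax hj' h.length_le))]

lemma prefix_of_cylinder_subset {A : Set X} {j j' : List ι} (hA : A ⊆ D.cylinder j)
    (hj' : D.cylinder j' ⊆ A) {x y : X} (hx : x ∈ A) (hy : y ∈ A)
    (hxy : wordRatio D.ratio j' * Metric.diam D.set < dist x y) : j <+: j' := by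
  obtain ⟨z, hz⟩ := D.cylinder_nonempty j'
  rcases D.prefix_or_prefix_of_not_disjoint (Set.not_disjoint_iff.mpr ⟨z, hA (hj' hz), hz⟩)
    with h | h
  · exact h
  · exact absurd (D.dist_le_of_mem_cylinder (D.cylinder_subset_of_prefix h (hA hx))
      (D.cylinder_subset_of_prefix h (hA hy))) (not_le.mpr hxy)

lemma continuous_map (u : ι) : Continuous (D.map u) :=
  (LipschitzWith.of_dist_le_mul (K := (D.ratio u).toNNReal) fun x y => by
    rw [D.isSimilarity u, Real.coe_toNNReal _ (D.ratio_nonneg u)]).continuous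

def IsGap (γ : ℝ) : Prop :=
  0 < γ ∧ Pairwise fun u v => ∀ x ∈ D.map u '' D.set, ∀ y ∈ D.map v '' D.set, γ ≤ dist x y

lemma exists_isGap [Finite ι] : ∃ γ, D.IsGap γ := by
  have hpair : ∀ p : ι × ι, ∀ᶠ γ in nhdsWithin (0 : ℝ) (Set.Ioi 0), p.1 ≠ p.2 →
      ∀ x ∈ D.map p.1 '' D.set, ∀ y ∈ D.map p.2 '' D.set, γ ≤ dist x y := by
    rintro ⟨u, v⟩
    by_cases huv : u = v
    · exact Filter.Eventually.of_forall fun _ h => absurd huv h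
    obtain ⟨r, hr, hrd⟩ := Metric.exists_pos_forall_lt_edist
      (D.isCompact.image (D.continuous_map u)) (D.isCompact.image (D.continuous_map v)).isClosed
      (D.pairwise_disjoint huv)
    filter_upwards [nhdsWithin_le_nhds (eventually_lt_nhds (NNReal.coe_pos.mpr hr))]
      with γ hγ _ x hx y hy
    have := hrd x hx y hy
    rw [edist_nndist, ENNReal.coe_lt_coe, ← NNReal.coe_lt_coe, coe_nndist] at this
    exact hγ.le.trans this.le
  obtain ⟨γ, hγ, hγ0⟩ := ((Filter.eventually_all.mpr hpair).and self_mem_nhdsWithin).exists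
  exact ⟨γ, hγ0, fun u v huv => hγ (u, v) huv⟩

variable {D}

lemma IsGap.le_dist_of_mem_of_notMem {γ : ℝ} (hγ : D.IsGap γ) :
    ∀ (w : List ι) {x y : X}, x ∈ D.cylinder w → y ∈ D.set → y ∉ D.cylinder w →
      γ * wordRatio D.ratio w ≤ dist x y
  | [], _, _, _, hy, hyw => absurd hy (by simpa using hyw)
  | u :: w, x, y, hx, hy, hyw => by
    rw [cylinder_cons] at hx hyw
    obtain ⟨x, hx, rfl⟩ := hx
    rw [D.eq_iUnion] at hy
    obtain ⟨v, y, hy', rfl⟩ := Set.mem_iUnion.mp hy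
    rcases eq_or_ne v u with rfl | hvu
    · have hyw' : y ∉ D.cylinder w := fun h => hyw (Set.mem_image_of_mem _ h)
      rw [D.isSimilarity v, wordRatio_cons, mul_left_comm]
      exact mul_le_mul_of_nonneg_left (hγ.le_dist_of_mem_of_notMem w hx hy' hyw')
        (D.ratio_nonneg v)
    · calc γ * wordRatio D.ratio (u :: w) ≤ γ * 1 :=
            mul_le_mul_of_nonneg_left (wordRatio_le_one D.ratio_nonneg D.ratio_le_one _) hγ.1.le
        _ ≤ dist (D.map u x) (D.map v y) := by
            rw [mul_one]
            exact hγ.2 hvu.symm _ (Set.mem_image_of_mem _ (D.cylinder_subset w hx)) _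
              (Set.mem_image_of_mem _ hy')

lemma IsGap.le_dist_of_mem_append_singleton {γ : ℝ} (hγ : D.IsGap γ) {w : List ι} {u v : ι}
    (huv : u ≠ v) {x y : X} (hx : x ∈ D.cylinder (w ++ [u])) (hy : y ∈ D.cylinder (w ++ [v])) :
    γ * wordRatio D.ratio w ≤ dist x y := by
  rw [cylinder_append, cylinder_singleton] at hx hy
  obtain ⟨x, hx, rfl⟩ := hx
  obtain ⟨y, hy, rfl⟩ := hy
  rw [dist_wordMap, mul_comm]
  exact mul_le_mul_of_nonneg_left (hγ.2 huv x hx y hy) (wordRatio_nonneg D.ratio_nonneg w)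

lemma IsGap.exists_le_dist [Nontrivial ι] {γ : ℝ} (hγ : D.IsGap γ) (w : List ι) :
    ∃ x ∈ D.cylinder w, ∃ y ∈ D.cylinder w, γ * wordRatio D.ratio w ≤ dist x y := by
  obtain ⟨u, v, huv⟩ := exists_pair_ne ι
  obtain ⟨x, hx⟩ := D.cylinder_nonempty (w ++ [u])
  obtain ⟨y, hy⟩ := D.cylinder_nonempty (w ++ [v])
  exact ⟨x, D.cylinder_subset_of_prefix (List.prefix_append _ _) hx,
    y, D.cylinder_subset_of_prefix (List.prefix_append _ _) hy,
    hγ.le_dist_of_mem_append_singleton huv hx hy⟩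

lemma IsGap.exists_le_dist_of_forall_prefix {γ : ℝ} (hγ : D.IsGap γ) {A : Set X}
    (hA : A.Nonempty) {j : List ι} (hAj : A ⊆ D.cylinder j)
    (hmax : ∀ j', A ⊆ D.cylinder j' → j' <+: j) :
    ∃ x ∈ A, ∃ y ∈ A, γ * wordRatio D.ratio j ≤ dist x y := by
  obtain ⟨x, hx⟩ := hA
  have hxj := hAj hx
  rw [D.cylinder_eq_iUnion] at hxj
  obtain ⟨u, hxu⟩ := Set.mem_iUnion.mp hxj
  have : ¬ A ⊆ D.cylinder (j ++ [u]) := fun h => by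
    simpa using (hmax _ h).length_le
  obtain ⟨y, hy, hyu⟩ := Set.not_subset.mp this
  have hyj := hAj hy
  rw [D.cylinder_eq_iUnion] at hyj
  obtain ⟨v, hyv⟩ := Set.mem_iUnion.mp hyj
  exact ⟨x, hx, y, hy, hγ.le_dist_of_mem_append_singleton (by rintro rfl; exact hyu hyv) hxu hyv⟩

variable {f : X → X} {C : ℝ}

lemma IsGap.le_dist_image_of_notMem {γ : ℝ} (hγ : D.IsGap γ) (hC : 0 < C)
    (hlo : ∀ x ∈ D.set, ∀ y ∈ D.set, C⁻¹ * dist x y ≤ dist (f x) (f y)) {i : List ι} {x y : X}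
    (hx : x ∈ f '' D.cylinder i) (hy : y ∈ f '' D.set) (hyi : y ∉ f '' D.cylinder i) :
    C⁻¹ * (γ * wordRatio D.ratio i) ≤ dist x y := by
  obtain ⟨a, ha, rfl⟩ := hx
  obtain ⟨b, hb, rfl⟩ := hy
  exact (mul_le_mul_of_nonneg_left (hγ.le_dist_of_mem_of_notMem i ha hb
    fun h => hyi (Set.mem_image_of_mem f h)) (inv_nonneg.mpr hC.le)).trans
    (hlo a (D.cylinder_subset i ha) b hb)

lemma IsGap.exists_le_dist_image [Nontrivial ι] {γ : ℝ} (hγ : D.IsGap γ) (hC : 0 < C)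
    (hlo : ∀ x ∈ D.set, ∀ y ∈ D.set, C⁻¹ * dist x y ≤ dist (f x) (f y)) (i : List ι) :
    ∃ x ∈ f '' D.cylinder i, ∃ y ∈ f '' D.cylinder i,
      C⁻¹ * (γ * wordRatio D.ratio i) ≤ dist x y := by
  obtain ⟨a, ha, b, hb, hab⟩ := hγ.exists_le_dist i
  exact ⟨f a, Set.mem_image_of_mem f ha, f b, Set.mem_image_of_mem f hb,
    (mul_le_mul_of_nonneg_left hab (inv_nonneg.mpr hC.le)).trans
      (hlo a (D.cylinder_subset i ha) b (D.cylinder_subset i hb))⟩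

lemma dist_le_of_mem_image_cylinder
    (hup : ∀ x ∈ D.set, ∀ y ∈ D.set, dist (f x) (f y) ≤ C * dist x y) (hC : 0 < C) {i : List ι}
    {x y : X} (hx : x ∈ f '' D.cylinder i) (hy : y ∈ f '' D.cylinder i) :
    dist x y ≤ C * (wordRatio D.ratio i * Metric.diam D.set) := by
  obtain ⟨a, ha, rfl⟩ := hx
  obtain ⟨b, hb, rfl⟩ := hy
  exact (hup a (D.cylinder_subset i ha) b (D.cylinder_subset i hb)).trans
    (mul_le_mul_of_nonneg_left (D.dist_le_of_mem_cylinder ha hb) hC.le)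

end DustSystem

/-- A coding of the images of the cylinders `E_i` of one self-similar set by cylinders of another:
the image of `E_i` is the disjoint union of the cylinders `F_j`, `j ∈ pieces i`, and `F_(top i)` is
the smallest cylinder containing it. Only the resulting combinatorics is recorded. -/
structure CylinderTransfer {ι κ : Type*} [Fintype ι] (σ : ι → ℝ) (τ : κ → ℝ) (s : ℝ) where
  pieces : List ι → Finset (List κ)
  top : List ι → List κ
  lower : ℝ
  upper : ℝ
  lower_pos : 0 < lower
  pieces_nonempty : ∀ i, (pieces i).Nonempty
  top_prefix : ∀ i, ∀ j ∈ pieces i, top i <+: j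
  top_prefix_top : ∀ i u, top i <+: top (i ++ [u])
  lower_mul_le : ∀ i, ∀ j ∈ pieces i, lower * wordRatio σ i ≤ wordRatio τ j
  wordRatio_top_le : ∀ i, wordRatio τ (top i) ≤ upper * wordRatio σ i
  sum_pieces_eq_sum_pieces_append : ∀ i, ∑ j ∈ pieces i, wordRatio τ j ^ s =
    ∑ u, ∑ j ∈ pieces (i ++ [u]), wordRatio τ j ^ s

namespace CylinderTransfer

variable {ι κ : Type*} [Fintype ι] {σ : ι → ℝ} {τ : κ → ℝ} {s : ℝ}

section

variable (T : CylinderTransfer σ τ s)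

def density (i : List ι) : ℝ :=
  (∑ j ∈ T.pieces i, wordRatio τ j ^ s) / wordRatio σ i ^ s

lemma top_prefix_top_append (i t : List ι) : T.top i <+: T.top (i ++ t) := by
  induction t generalizing i with
  | nil => simp
  | cons u t ih => simpa using (T.top_prefix_top i u).trans (ih (i ++ [u]))

lemma density_pos (hσ : ∀ u, 0 < σ u) (hτ : ∀ u, 0 < τ u) (i : List ι) : 0 < T.density i :=
  div_pos (Finset.sum_pos (fun j _ => Real.rpow_pos_of_pos (wordRatio_pos hτ j) s)
    (T.pieces_nonempty i)) (Real.rpow_pos_of_pos (wordRatio_pos hσ i) s)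

lemma density_eq_sum (hσ : ∀ u, 0 < σ u) (i : List ι) :
    T.density i = ∑ u, σ u ^ s * T.density (i ++ [u]) := by
  have hpi := Real.rpow_pos_of_pos (wordRatio_pos hσ i) s
  rw [density, T.sum_pieces_eq_sum_pieces_append i, Finset.sum_div]
  refine Finset.sum_congr rfl fun u _ => ?_
  have := Real.rpow_pos_of_pos (hσ u) s
  rw [density, wordRatio_append, wordRatio_cons, wordRatio_nil, mul_one,
    Real.mul_rpow (wordRatio_pos hσ i).le (hσ _).le]
  field_simp

lemma lower_mul_le_wordRatio_top (hτ : ∀ u, τ u ∈ Set.Ioo 0 1) (i : List ι) :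
    T.lower * wordRatio σ i ≤ wordRatio τ (T.top i) := by
  obtain ⟨j, hj⟩ := T.pieces_nonempty i
  exact (T.lower_mul_le i j hj).trans
    (wordRatio_le_of_prefix (fun u => (hτ u).1.le) (fun u => (hτ u).2.le) (T.top_prefix i j hj))

lemma upper_pos (hτ : ∀ u, τ u ∈ Set.Ioo 0 1) : 0 < T.upper := by
  have h := (T.lower_mul_le_wordRatio_top hτ []).trans (T.wordRatio_top_le [])
  simp only [wordRatio_nil, mul_one] at h
  exact T.lower_pos.trans_le h

lemma lower_mul_le_upper_mul_of_top_append (hσ : ∀ u, 0 < σ u) (hτ : ∀ u, τ u ∈ Set.Ioo 0 1)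
    {i t : List ι} {v : List κ} (hv : T.top (i ++ t) = T.top i ++ v) :
    T.lower * wordRatio σ t ≤ T.upper * wordRatio τ v := by
  refine le_of_mul_le_mul_left ?_ (wordRatio_pos hσ i)
  calc wordRatio σ i * (T.lower * wordRatio σ t) = T.lower * wordRatio σ (i ++ t) := by
        rw [wordRatio_append]; ring
    _ ≤ wordRatio τ (T.top i) * wordRatio τ v := by
        rw [← wordRatio_append, ← hv]; exact T.lower_mul_le_wordRatio_top hτ _
    _ ≤ T.upper * wordRatio σ i * wordRatio τ v :=
        mul_le_mul_of_nonneg_right (T.wordRatio_top_le i) (wordRatio_pos (fun u => (hτ u).1) v).le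
    _ = wordRatio σ i * (T.upper * wordRatio τ v) := by ring

variable [DecidableEq κ]

def pattern (i : List ι) : Finset (List κ) := (T.pieces i).image (List.drop (T.top i).length)

lemma sum_pieces_eq (hτ : ∀ u, 0 < τ u) (i : List ι) :
    ∑ j ∈ T.pieces i, wordRatio τ j ^ s =
      wordRatio τ (T.top i) ^ s * ∑ w ∈ T.pattern i, wordRatio τ w ^ s := by
  have happend : ∀ j ∈ T.pieces i, T.top i ++ j.drop (T.top i).length = j :=
    fun j hj => List.prefix_iff_eq_append.mp (T.top_prefix i j hj)
  rw [pattern, Finset.sum_image fun j hj j' hj' h => by rw [← happend j hj, h, happend j' hj'],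
    Finset.mul_sum]
  refine Finset.sum_congr rfl fun j hj => ?_
  rw [← Real.mul_rpow (wordRatio_pos hτ _).le (wordRatio_pos hτ _).le, ← wordRatio_append,
    happend j hj]

lemma lower_le_upper_mul_of_mem_pattern (hσ : ∀ u, 0 < σ u) (hτ : ∀ u, 0 < τ u) {i : List ι}
    {w : List κ} (hw : w ∈ T.pattern i) : T.lower ≤ T.upper * wordRatio τ w := by
  obtain ⟨j, hj, rfl⟩ := Finset.mem_image.mp hw
  have hpi := wordRatio_pos hσ i
  refine le_of_mul_le_mul_right ?_ hpi
  calc T.lower * wordRatio σ i ≤ wordRatio τ j := T.lower_mul_le i j hj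
    _ = wordRatio τ (T.top i) * wordRatio τ (j.drop (T.top i).length) := by
      rw [← wordRatio_append, List.prefix_iff_eq_append.mp (T.top_prefix i j hj)]
    _ ≤ T.upper * wordRatio σ i * wordRatio τ (j.drop (T.top i).length) :=
      mul_le_mul_of_nonneg_right (T.wordRatio_top_le i) (wordRatio_pos hτ _).le
    _ = _ := by ring

lemma density_append_eq (hσ : ∀ u, 0 < σ u) (hτ : ∀ u, 0 < τ u) {i t : List ι} {v : List κ}
    (hv : T.top (i ++ t) = T.top i ++ v) :
    wordRatio σ t ^ s * (∑ w ∈ T.pattern i, wordRatio τ w ^ s) * T.density (i ++ t) =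
      wordRatio τ v ^ s * (∑ w ∈ T.pattern (i ++ t), wordRatio τ w ^ s) * T.density i := by
  have h1 := Real.rpow_pos_of_pos (wordRatio_pos hσ i) s
  have h2 := Real.rpow_pos_of_pos (wordRatio_pos hσ t) s
  simp only [density, T.sum_pieces_eq hτ, hv, wordRatio_append,
    Real.mul_rpow (wordRatio_pos hσ _).le (wordRatio_pos hσ _).le,
    Real.mul_rpow (wordRatio_pos hτ _).le (wordRatio_pos hτ _).le]
  field_simp

lemma sum_pattern_pos (hτ : ∀ u, 0 < τ u) (i : List ι) :
    0 < ∑ w ∈ T.pattern i, wordRatio τ w ^ s :=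
  Finset.sum_pos (fun w _ => Real.rpow_pos_of_pos (wordRatio_pos hτ w) s)
    ((T.pieces_nonempty i).image _)

lemma exists_pattern_append_replicate_eq (hfin : (Set.range T.pattern).Finite) (i : List ι)
    (u : ι) :
    ∃ g₁ g₂, g₁ < g₂ ∧ g₂ ≤ (Set.range T.pattern).ncard ∧
      T.pattern (i ++ List.replicate g₁ u) = T.pattern (i ++ List.replicate g₂ u) := by
  obtain ⟨g₁, hg₁, g₂, hg₂, hne, heq⟩ := Finset.exists_ne_map_eq_of_card_lt_of_maps_to
    (s := Finset.range ((Set.range T.pattern).ncard + 1)) (t := hfin.toFinset)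
    (f := fun g => T.pattern (i ++ List.replicate g u))
    (by simp [Set.ncard_eq_toFinset_card _ hfin]) fun g _ => by simp
  rw [Finset.mem_range] at hg₁ hg₂
  rcases hne.lt_or_gt with h | h
  · exact ⟨g₁, g₂, h, by omega, heq⟩
  · exact ⟨g₂, g₁, h, by omega, heq.symm⟩

variable [Finite κ]

lemma finite_range_pattern (hσ : ∀ u, 0 < σ u) (hτ : ∀ u, τ u ∈ Set.Ioo 0 1) :
    (Set.range T.pattern).Finite := by
  have hupper := T.upper_pos hτ
  have hfin := finite_setOf_le_wordRatio hτ (div_pos T.lower_pos hupper)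
  refine (hfin.finite_subsets.preimage Finset.coe_injective.injOn).subset ?_
  rintro _ ⟨i, rfl⟩ w hw
  exact (div_le_iff₀' hupper).mpr (T.lower_le_upper_mul_of_mem_pattern hσ (fun u => (hτ u).1) hw)

lemma bddAbove_range_density (hσ : ∀ u, 0 < σ u) (hτ : ∀ u, τ u ∈ Set.Ioo 0 1)
    (hs : 0 ≤ s) : BddAbove (Set.range T.density) := by
  obtain ⟨B, hB⟩ := ((T.finite_range_pattern hσ hτ).image
    fun W => ∑ w ∈ W, wordRatio τ w ^ s).bddAbove
  refine ⟨T.upper ^ s * B, ?_⟩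
  rintro _ ⟨i, rfl⟩
  have hτ0 : ∀ u, 0 < τ u := fun u => (hτ u).1
  have hpi := Real.rpow_pos_of_pos (wordRatio_pos hσ i) s
  rw [density, T.sum_pieces_eq hτ0, div_le_iff₀ hpi, mul_right_comm,
    ← Real.mul_rpow (T.upper_pos hτ).le (wordRatio_pos hσ i).le]
  exact mul_le_mul (Real.rpow_le_rpow (wordRatio_pos hτ0 _).le (T.wordRatio_top_le i) hs)
    (hB ⟨_, ⟨i, rfl⟩, rfl⟩) (Finset.sum_nonneg fun w _ => (Real.rpow_pos_of_pos
      (wordRatio_pos hτ0 w) s).le) (Real.rpow_nonneg (mul_pos (T.upper_pos hτ)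
      (wordRatio_pos hσ i)).le s)

lemma exists_forall_prefix_near_sSup (hσ : ∀ u, 0 < σ u)
    (hτ : ∀ u, τ u ∈ Set.Ioo 0 1) (hs : 0 ≤ s) (hsum : ∑ u, σ u ^ s = 1) (t : List ι) {δ : ℝ}
    (hδ : 0 < δ) : ∃ i, ∀ t', t' <+: t → sSup (Set.range T.density) - δ ≤ T.density (i ++ t') :=
  exists_forall_prefix_sSup_sub_le_of_harmonic (fun u => Real.rpow_pos_of_pos (hσ u) s) hsum
    (T.bddAbove_range_density hσ hτ hs) (T.density_eq_sum hσ) t hδ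

lemma exists_eq_of_forall_near_sSup (hσ : ∀ u, 0 < σ u) (hτ : ∀ u, τ u ∈ Set.Ioo 0 1)
    (hs : 0 ≤ s) {𝒟 : Set (List ι × Finset (List κ) × Finset (List κ))} (h𝒟 : 𝒟.Finite)
    (h : ∀ δ > 0, ∃ i t, (t, T.pattern i, T.pattern (i ++ t)) ∈ 𝒟 ∧
      sSup (Set.range T.density) - δ ≤ T.density i ∧
      sSup (Set.range T.density) - δ ≤ T.density (i ++ t)) :
    ∃ t W W', (t, W, W') ∈ 𝒟 ∧ ∃ v : List κ,
      wordRatio σ t ^ s * ∑ w ∈ W, wordRatio τ w ^ s =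
        wordRatio τ v ^ s * ∑ w ∈ W', wordRatio τ w ^ s := by
  set W := sSup (Set.range T.density)
  have hτ0 : ∀ u, 0 < τ u := fun u => (hτ u).1
  have hbdd := T.bddAbove_range_density hσ hτ hs
  have hW : 0 < W := (T.density_pos hσ hτ0 []).trans_le (le_csSup hbdd ⟨[], rfl⟩)
  have hupper := T.upper_pos hτ
  have hfin : {x : (List ι × Finset (List κ) × Finset (List κ)) × List κ |
      x.1 ∈ 𝒟 ∧ T.lower * wordRatio σ x.1.1 ≤ T.upper * wordRatio τ x.2}.Finite := by
    refine (h𝒟.prod (h𝒟.biUnion fun d _ => finite_setOf_le_wordRatio hτ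
      (div_pos (mul_pos T.lower_pos (wordRatio_pos hσ d.1)) hupper))).subset ?_
    rintro ⟨d, v⟩ ⟨hd, hv⟩
    exact ⟨hd, Set.mem_biUnion hd ((div_le_iff₀' hupper).mpr hv)⟩
  obtain ⟨⟨⟨t, V, V'⟩, v⟩, ⟨ht, -⟩, hP⟩ := hfin.exists_forall_pos_of_monotone
    (P := fun δ x => ∃ i, (x.1.1, T.pattern i, T.pattern (i ++ x.1.1)) = x.1 ∧
      T.top (i ++ x.1.1) = T.top i ++ x.2 ∧ W - δ ≤ T.density i ∧ W - δ ≤ T.density (i ++ x.1.1))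
    (fun x δ δ' hδ ⟨i, hx, hv, h1, h2⟩ => ⟨i, hx, hv, by linarith, by linarith⟩)
    fun δ hδ => by
      obtain ⟨i, t, ht, h1, h2⟩ := h δ hδ
      obtain ⟨v, hv⟩ := T.top_prefix_top_append i t
      refine ⟨((t, T.pattern i, T.pattern (i ++ t)), v), ⟨ht, ?_⟩, i, rfl, hv.symm, h1, h2⟩
      exact T.lower_mul_le_upper_mul_of_top_append hσ hτ hv.symm
  have hnonneg : ∀ (r : ℝ) (V : Finset (List κ)), 0 ≤ r → 0 ≤ r * ∑ w ∈ V, wordRatio τ w ^ s :=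
    fun r V hr => mul_nonneg hr (Finset.sum_nonneg fun w _ =>
      Real.rpow_nonneg (wordRatio_pos hτ0 w).le s)
  have hle : ∀ j, T.density j ≤ W := fun j => le_csSup hbdd ⟨j, rfl⟩
  refine ⟨t, V, V', ht, v, eq_of_forall_pos_exists_mul_eq_mul
    (hnonneg _ V (Real.rpow_nonneg (wordRatio_pos hσ t).le s))
    (hnonneg _ V' (Real.rpow_nonneg (wordRatio_pos hτ0 v).le s)) hW fun δ hδ => ?_⟩
  obtain ⟨i, hi, hv, h1, h2⟩ := hP δ hδ
  simp only [Prod.mk.injEq, true_and] at hi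
  obtain ⟨rfl, rfl⟩ := hi
  exact ⟨_, ⟨h2, hle _⟩, _, ⟨h1, hle i⟩, T.density_append_eq hσ hτ0 hv⟩

end

variable [DecidableEq κ] [Finite κ]

lemma rpow_mem_subfieldClosure (T : CylinderTransfer σ τ s) (hσ : ∀ u, 0 < σ u)
    (hτ : ∀ u, τ u ∈ Set.Ioo 0 1) (hs : 0 ≤ s) (hsum : ∑ u, σ u ^ s = 1) (u : ι) :
    σ u ^ s ∈ Subfield.closure (Set.range fun v => τ v ^ s) := by
  have hτ0 : ∀ v, 0 < τ v := fun v => (hτ v).1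
  have hfin := T.finite_range_pattern hσ hτ
  obtain ⟨_, _, W', ⟨rfl, ⟨i, rfl⟩, -⟩, v, heq⟩ := T.exists_eq_of_forall_near_sSup hσ hτ hs
    (𝒟 := {x | x.1 = [u] ∧ x.2.1 ∈ Set.range T.pattern ∧ x.2.2 ∈ Set.range T.pattern})
    (((Set.finite_singleton [u]).prod (hfin.prod hfin)).subset fun x hx => ⟨hx.1, hx.2⟩)
    fun δ hδ => by
      obtain ⟨i, hi⟩ := T.exists_forall_prefix_near_sSup hσ hτ hs hsum [u] hδ
      exact ⟨i, [u], ⟨rfl, ⟨i, rfl⟩, _, rfl⟩, by simpa using hi [] List.nil_prefix,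
        hi [u] List.prefix_rfl⟩
  have hmem : ∀ w, wordRatio τ w ^ s ∈ Subfield.closure (Set.range fun v => τ v ^ s) :=
    fun w => (wordRatio_rpow (fun v => (hτ0 v).le) s w).symm ▸ wordRatio_mem_subfieldClosure w
  have hS := T.sum_pattern_pos hτ0 i
  rw [show σ u ^ s = wordRatio τ v ^ s * (∑ w ∈ W', wordRatio τ w ^ s) /
      ∑ w ∈ T.pattern i, wordRatio τ w ^ s by rw [eq_div_iff hS.ne', ← heq]; simp]
  exact div_mem (mul_mem (hmem v) (sum_mem fun w _ => hmem w)) (sum_mem fun w _ => hmem w)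

lemma exists_pow_mem_subsemigroupClosure (T : CylinderTransfer σ τ s)
    (hσ : ∀ u, σ u ∈ Set.Ioo 0 1) (hτ : ∀ u, τ u ∈ Set.Ioo 0 1) (hs : 0 < s)
    (hsum : ∑ u, σ u ^ s = 1) (u : ι) :
    ∃ g, 0 < g ∧ σ u ^ g ∈ Subsemigroup.closure (Set.range τ) := by
  have hσ0 : ∀ v, 0 < σ v := fun v => (hσ v).1
  have hτ0 : ∀ v, 0 < τ v := fun v => (hτ v).1
  have hfin := T.finite_range_pattern hσ0 hτ
  set M := (Set.range T.pattern).ncard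
  obtain ⟨_, W, W', ⟨⟨g, hg, -, rfl⟩, hWW', hW⟩, v, heq⟩ :=
    T.exists_eq_of_forall_near_sSup hσ0 hτ hs.le
    (𝒟 := {x | (∃ g, 0 < g ∧ g ≤ M ∧ x.1 = List.replicate g u) ∧ x.2.1 = x.2.2 ∧
      x.2.1 ∈ Set.range T.pattern})
    ((((Set.finite_Icc 1 M).image fun g => List.replicate g u).prod (hfin.prod hfin)).subset
      fun x ⟨⟨g, hg, hgM, hx⟩, hW, hW'⟩ => ⟨⟨g, ⟨hg, hgM⟩, hx.symm⟩, hW', hW ▸ hW'⟩)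
    fun δ hδ => by
      obtain ⟨i, hi⟩ := T.exists_forall_prefix_near_sSup hσ0 hτ hs.le hsum
        (List.replicate M u) hδ
      have hpre : ∀ g ≤ M, List.replicate g u <+: List.replicate M u := fun g hg =>
        ⟨List.replicate (M - g) u, by rw [← List.replicate_add]; congr 1; omega⟩
      obtain ⟨g₁, g₂, hlt, hle, heq⟩ := T.exists_pattern_append_replicate_eq hfin i u
      have happ : i ++ List.replicate g₁ u ++ List.replicate (g₂ - g₁) u =
          i ++ List.replicate g₂ u := by
        rw [List.append_assoc, ← List.replicate_add]; congr 2; omega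
      refine ⟨i ++ List.replicate g₁ u, List.replicate (g₂ - g₁) u,
        ⟨⟨g₂ - g₁, by omega, by omega, rfl⟩, by rw [happ, heq], ⟨_, rfl⟩⟩,
        hi _ (hpre g₁ (by omega)), by rw [happ]; exact hi _ (hpre g₂ hle)⟩
  dsimp only at hWW' hW
  subst hWW'
  obtain ⟨i, rfl⟩ := hW
  have h1 : (σ u ^ g) ^ s = wordRatio τ v ^ s := by
    simpa using mul_right_cancel₀ (T.sum_pattern_pos hτ0 i).ne' heq
  have h2 : σ u ^ g = wordRatio τ v :=
    (Real.rpow_left_inj (pow_nonneg (hσ0 u).le g) (wordRatio_pos hτ0 v).le hs.ne').mp h1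
  have hv : v ≠ [] := by
    rintro rfl
    exact (pow_lt_one₀ (hσ0 u).le (hσ u).2 hg.ne').ne (by simpa using h2)
  exact ⟨g, hg, h2 ▸ wordRatio_mem_subsemigroupClosure hv⟩

end CylinderTransfer

namespace DustSystem

variable {ι κ X : Type*} [MetricSpace X] [Fintype ι] [Fintype κ]

lemma exists_pieces_top [Nontrivial ι] (D : DustSystem ι X) (D' : DustSystem κ X) {f : X → X}
    {C : ℝ} (hf : Set.BijOn f D.set D'.set) (hC : 0 < C)
    (hlo : ∀ x ∈ D.set, ∀ y ∈ D.set, C⁻¹ * dist x y ≤ dist (f x) (f y))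
    (hup : ∀ x ∈ D.set, ∀ y ∈ D.set, dist (f x) (f y) ≤ C * dist x y) :
    ∃ lower > 0, ∃ upper, ∀ i, ∃ (P : Finset (List κ)) (top : List κ),
      ⋃ j ∈ P, D'.cylinder j = f '' D.cylinder i ∧
      (P : Set (List κ)).PairwiseDisjoint D'.cylinder ∧
      (∀ j ∈ P, lower * wordRatio D.ratio i ≤ wordRatio D'.ratio j ∧ top <+: j) ∧
      f '' D.cylinder i ⊆ D'.cylinder top ∧
      (∀ j, f '' D.cylinder i ⊆ D'.cylinder j → j <+: top) ∧
      wordRatio D'.ratio top ≤ upper * wordRatio D.ratio i := by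
  obtain ⟨γ, hγ⟩ := D.exists_isGap
  obtain ⟨γ', hγ'⟩ := D'.exists_isGap
  obtain ⟨q, hq, hqle⟩ := D'.exists_pos_le_ratio
  obtain ⟨c, hc0, hc1, hcδ⟩ :=
    exists_pos_lt_one_mul_lt (mul_pos (inv_pos.mpr hC) hγ.1) (Metric.diam_nonneg (s := D'.set))
  -- The pieces of `f(E_i)` are the cylinders of the cut at scale `r = c|i|` that meet it; `c` is
  -- so small that such a cylinder can neither leave `f(E_i)` nor contain it.
  refine ⟨q * c, mul_pos hq hc0, C * Metric.diam D.set / γ', fun i => ?_⟩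
  have hpi := wordRatio_pos D.ratio_pos i
  set r := c * wordRatio D.ratio i
  have hr0 : 0 < r := mul_pos hc0 hpi
  have hr1 : r < 1 :=
    (mul_le_of_le_one_right hc0.le (wordRatio_le_one D.ratio_nonneg D.ratio_le_one i)).trans_lt hc1
  have hrδ : r * Metric.diam D'.set < C⁻¹ * (γ * wordRatio D.ratio i) := by
    rw [mul_right_comm, mul_comm c, ← mul_assoc]
    exact mul_lt_mul_of_pos_right hcδ hpi
  have hA : f '' D.cylinder i ⊆ D'.set := hf.image_eq ▸ Set.image_mono (D.cylinder_subset i)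
  have hU := D'.iUnion_cut_eq_of_separated hA (fun x hx y hy hyA =>
    hγ.le_dist_image_of_notMem hC hlo hx (hf.image_eq ▸ hy) hyA) hr0 hrδ
  obtain ⟨x, hx, y, hy, hxy⟩ := hγ.exists_le_dist_image hC hlo i
  obtain ⟨top, htop, hmax⟩ := D'.exists_forall_subset_cylinder_prefix hA hx hy
    (dist_pos.mp ((mul_pos (inv_pos.mpr hC) (mul_pos hγ.1 hpi)).trans_le hxy))
  have hfin : {j ∈ D'.cut r | (D'.cylinder j ∩ f '' D.cylinder i).Nonempty}.Finite :=
    (D'.finite_cut hr0 hr1).subset fun j hj => hj.1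
  refine ⟨hfin.toFinset, top, by simpa using hU,
    (D'.pairwise_disjoint_cut r).subset fun j hj => (hfin.mem_toFinset.mp hj).1,
    fun j hj => ⟨?_, ?_⟩, htop, hmax, ?_⟩
  · rw [mul_assoc]
    exact (D'.mul_lt_wordRatio_of_mem_cut hqle hr1 (hfin.mem_toFinset.mp hj).1).le
  · refine D'.prefix_of_cylinder_subset htop (hU ▸ Set.subset_biUnion_of_mem
      (u := D'.cylinder) (hfin.mem_toFinset.mp hj)) hx hy (lt_of_le_of_lt ?_ (hrδ.trans_le hxy))
    exact mul_le_mul_of_nonneg_right (hfin.mem_toFinset.mp hj).1.1 Metric.diam_nonneg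
  · obtain ⟨x', hx', y', hy', h⟩ := hγ'.exists_le_dist_of_forall_prefix ⟨x, hx⟩ htop hmax
    rw [div_mul_eq_mul_div, le_div_iff₀ hγ'.1, mul_comm]
    calc γ' * wordRatio D'.ratio top ≤ dist x' y' := h
      _ ≤ C * (wordRatio D.ratio i * Metric.diam D.set) :=
          dist_le_of_mem_image_cylinder hup hC hx' hy'
      _ = _ := by ring

lemma nonempty_cylinderTransfer (D : DustSystem ι X) (D' : DustSystem κ X)
    (h : LipschitzEquivalent D.set D'.set) {s : ℝ} (hs : 0 < s) (hsum : ∑ u, D.ratio u ^ s = 1)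
    (hsum' : ∑ u, D'.ratio u ^ s = 1) : Nonempty (CylinderTransfer D.ratio D'.ratio s) := by
  obtain ⟨f, C, hC, hf, hlip⟩ := h
  have := nontrivial_of_sum_rpow_eq_one D.ratio_mem hs hsum
  obtain ⟨lower, hlower, upper, h⟩ := exists_pieces_top D D' hf hC
    (fun x hx y hy => (hlip x hx y hy).1) (fun x hx y hy => (hlip x hx y hy).2)
  choose P top hU hP hPtop htop hmax hupper using h
  have hdisj : ∀ i, Pairwise fun u v =>
      Disjoint (f '' D.cylinder (i ++ [u])) (f '' D.cylinder (i ++ [v])) := by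
    intro i u v huv
    rw [Set.disjoint_iff_inter_eq_empty, ← hf.injOn.image_inter (D.cylinder_subset _)
      (D.cylinder_subset _), (D.disjoint_cylinder_append_singleton i huv).inter_eq,
      Set.image_empty]
  exact ⟨{
    pieces := P
    top := top
    lower := lower
    upper := upper
    lower_pos := hlower
    pieces_nonempty := fun i => by
      obtain ⟨x, hx⟩ := (D.cylinder_nonempty i).image f
      obtain ⟨j, hj, -⟩ := Set.mem_iUnion₂.mp ((hU i).symm ▸ hx)
      exact ⟨j, hj⟩
    top_prefix := fun i j hj => (hPtop i j hj).2
    top_prefix_top := fun i u => hmax (i ++ [u]) (top i) ((Set.image_mono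
      (D.cylinder_subset_of_prefix (List.prefix_append i [u]))).trans (htop i))
    lower_mul_le := fun i j hj => (hPtop i j hj).1
    wordRatio_top_le := hupper
    sum_pieces_eq_sum_pieces_append := fun i =>
      D'.sum_rpow_eq_sum_sum_of_iUnion_eq hsum' (hP i) (fun u => hP _)
        (by simpa only [hU] using hdisj i)
        (by simp only [hU]; rw [D.cylinder_eq_iUnion, Set.image_iUnion]) }⟩

theorem rpow_mem_subfieldClosure_and_exists_pow_mem_subsemigroupClosure
    (D : DustSystem ι X) (D' : DustSystem κ X) (h : LipschitzEquivalent D.set D'.set) {s : ℝ}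
    (hs : 0 < s) (hsum : ∑ u, D.ratio u ^ s = 1) (hsum' : ∑ u, D'.ratio u ^ s = 1) :
    (∀ u, D.ratio u ^ s ∈ Subfield.closure (Set.range fun v => D'.ratio v ^ s)) ∧
      ∃ p, 0 < p ∧ ∀ u, D.ratio u ^ p ∈ Subsemigroup.closure (Set.range D'.ratio) := by
  classical
  obtain ⟨T⟩ := D.nonempty_cylinderTransfer D' h hs hsum hsum'
  exact ⟨T.rpow_mem_subfieldClosure D.ratio_pos D'.ratio_mem hs.le hsum,
    Subsemigroup.exists_pow_mem_of_forall _ _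
      (T.exists_pow_mem_subsemigroupClosure D.ratio_mem D'.ratio_mem hs hsum)⟩

end DustSystem

lemma IsDustLike.exists_dustSystem {X : Type*} [MetricSpace X] {m : ℕ} {ρ : Fin m → ℝ}
    {E : Set X} (hE : IsDustLike ρ E) (hρ : ∀ j, ρ j ∈ Set.Ioo 0 1) :
    ∃ D : DustSystem (Fin m) X, D.ratio = ρ ∧ D.set = E := by
  obtain ⟨hne, hc, φ, hφ, hEu, hEd⟩ := hE
  exact ⟨⟨ρ, φ, E, hρ, hφ, hne, hc, hEu, hEd⟩, rfl, rfl⟩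

theorem falconer_marsh_general
    (d m n : ℕ)
    (ρ : Fin m → ℝ) (τ : Fin n → ℝ)
    (hρ : IsContractionVector d m ρ) (hτ : IsContractionVector d n τ)
    (E F : Set (EuclideanSpace ℝ (Fin d)))
    (hE : IsDustLike ρ E) (hF : IsDustLike τ F)
    (hEF : LipschitzEquivalent E F)
    (s : ℝ) (hs : 0 < s)
    (hρs : ∑ j, ρ j ^ s = 1) (hτs : ∑ j, τ j ^ s = 1) :
    Subfield.closure (Set.range fun j => ρ j ^ s)
      = Subfield.closure (Set.range fun j => τ j ^ s) ∧
    ∃ p q : ℕ, 0 < p ∧ 0 < q ∧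
      Subsemigroup.closure (Set.range fun j => ρ j ^ p)
        ≤ Subsemigroup.closure (Set.range fun j => τ j) ∧
      Subsemigroup.closure (Set.range fun j => τ j ^ q)
        ≤ Subsemigroup.closure (Set.range fun j => ρ j) := by
  obtain ⟨D, rfl, rfl⟩ := hE.exists_dustSystem hρ.1
  obtain ⟨D', rfl, rfl⟩ := hF.exists_dustSystem hτ.1
  obtain ⟨hfield, p, hp, hpmem⟩ :=
    D.rpow_mem_subfieldClosure_and_exists_pow_mem_subsemigroupClosure D' hEF hs hρs hτs
  obtain ⟨hfield', q, hq, hqmem⟩ :=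
    D'.rpow_mem_subfieldClosure_and_exists_pow_mem_subsemigroupClosure D hEF.symm hs hτs hρs
  refine ⟨le_antisymm ?_ ?_, p, q, hp, hq, ?_, ?_⟩
  · exact Subfield.closure_le.mpr (Set.range_subset_iff.mpr hfield)
  · exact Subfield.closure_le.mpr (Set.range_subset_iff.mpr hfield')
  · exact Subsemigroup.closure_le.mpr (Set.range_subset_iff.mpr hpmem)
  · exact Subsemigroup.closure_le.mpr (Set.range_subset_iff.mpr hqmem)

theorem falconer_marsh
    (d m n : ℕ) (hd : 1 ≤ d)
    (ρ : Fin m → ℝ) (τ : Fin n → ℝ)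
    (hρ : IsContractionVector d m ρ) (hτ : IsContractionVector d n τ)
    (E F : Set (EuclideanSpace ℝ (Fin d)))
    (hE : IsDustLike ρ E) (hF : IsDustLike τ F)
    (hEF : LipschitzEquivalent E F)
    (s : ℝ) (hs : 0 < s)
    (hρs : ∑ j, ρ j ^ s = 1) (hτs : ∑ j, τ j ^ s = 1) :
    Subfield.closure (Set.range fun j => ρ j ^ s)
      = Subfield.closure (Set.range fun j => τ j ^ s) ∧
    ∃ p q : ℕ, 0 < p ∧ 0 < q ∧
      Subsemigroup.closure (Set.range fun j => ρ j ^ p)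
        ≤ Subsemigroup.closure (Set.range fun j => τ j) ∧
      Subsemigroup.closure (Set.range fun j => τ j ^ q)
        ≤ Subsemigroup.closure (Set.range fun j => ρ j) :=
  falconer_marsh_general d m n ρ τ hρ hτ E F hE hF hEF s hs hρs hτs
end
end
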